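/- arXiv:0909.2331 — 13 statements merged into one kernel-verified Lean document; each statement's English description precedes it below -/
import Mathlib

section
/- For all positive integers m ≤ n, the number of ascending compositions of n whose first part is at least m satisfies the recurrence nac(n,m) = 1 + ∑_{x=m}^{⌊n/2⌋} nac(n−x, x) (the sum being empty when m > ⌊n/2⌋). -/
/-- `a` is an ascending composition of `n`: a nonempty finite sequence of positive
integers in nondecreasing order summing to `n`. -/
def IsAscComp (n : ℕ) (a : List ℕ) : Prop :=
  a ≠ [] ∧ (∀ x ∈ a, 0 < x) ∧ a.Pairwise (· ≤ ·) ∧ a.sum = n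

/-- `sac n m`: ascending compositions of `n` whose first part is at least `m`. -/
def sac (n m : ℕ) : Set (List ℕ) := {a | IsAscComp n a ∧ m ≤ a.head!}

/-- `nac n m = |sac n m|`. -/
noncomputable def nac (n m : ℕ) : ℕ := (sac n m).ncard

lemma sac_finite (n m : ℕ) : (sac n m).Finite := by
  apply Set.Finite.subset (Set.finite_range (Composition.blocks (n := n)))
  rintro a ⟨⟨_, hpos, _, hsum⟩, _⟩
  exact ⟨⟨a, fun {i} hi => hpos i hi, hsum⟩, rfl⟩

lemma aux_ncard_biUnion {α β : Type*} (s : Finset α) (f : α → Set β)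
    (hf : ∀ x ∈ s, (f x).Finite)
    (hd : ∀ x ∈ s, ∀ y ∈ s, x ≠ y → Disjoint (f x) (f y)) :
    (⋃ x ∈ s, f x).ncard = ∑ x ∈ s, (f x).ncard := by
  classical
  induction s using Finset.induction with
  | empty => simp
  | @insert a s hx ih =>
    have hUfin : (⋃ x ∈ s, f x).Finite := by
      apply Set.Finite.biUnion (Finset.finite_toSet s)
      exact fun i hi => hf i (Finset.mem_insert_of_mem hi)
    have hdisj : Disjoint (f a) (⋃ x ∈ s, f x) := by
      simp only [Set.disjoint_iUnion_right]
      intro i hi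
      exact hd a (Finset.mem_insert_self a s) i (Finset.mem_insert_of_mem hi)
        (by rintro rfl; exact hx hi)
    rw [Finset.set_biUnion_insert, Finset.sum_insert hx,
      Set.ncard_union_eq hdisj (hf a (Finset.mem_insert_self a s)) hUfin,
      ih (fun x hx => hf x (Finset.mem_insert_of_mem hx))
        (fun x hx y hy => hd x (Finset.mem_insert_of_mem hx) y (Finset.mem_insert_of_mem hy))]

lemma sac_eq (n m : ℕ) (hm : 1 ≤ m) (hmn : m ≤ n) :
    sac n m = insert [n] (⋃ x ∈ Finset.Icc m (n / 2), (x :: ·) '' sac (n - x) x) := by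
  ext a
  simp only [Set.mem_insert_iff, Set.mem_iUnion, Finset.mem_Icc, Set.mem_image, exists_prop]
  constructor
  · rintro ⟨⟨hne, hpos, hsort, hsum⟩, hhead⟩
    match a with
    | [] => exact absurd rfl hne
    | [x] =>
      left
      simp at hsum; subst hsum; rfl
    | x :: y :: t =>
      right
      refine ⟨x, ⟨?_, ?_⟩, y :: t, ⟨⟨by simp, ?_, hsort.of_cons, ?_⟩, ?_⟩, rfl⟩
      · simpa using hhead
      · -- x ≤ n / 2 since x + y ≤ sum and x ≤ y
        have hxy : x ≤ y := (List.pairwise_cons.mp hsort).1 y (by simp)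
        have hn : x * 2 ≤ n := by
          simp only [List.sum_cons] at hsum
          omega
        exact (Nat.le_div_iff_mul_le (by norm_num)).mpr hn
      · intro z hz; exact hpos z (List.mem_cons_of_mem _ hz)
      · simp only [List.sum_cons] at hsum ⊢
        have hxy : x ≤ y := (List.pairwise_cons.mp hsort).1 y (by simp)
        omega
      · simpa using (List.pairwise_cons.mp hsort).1 y (by simp)
  · rintro (rfl | ⟨x, ⟨hmx, hx2⟩, b, ⟨⟨hbne, hbpos, hbsort, hbsum⟩, hbhead⟩, rfl⟩)
    · exact ⟨⟨by simp, by intro z hz; simp at hz; omega, by simp, by simp⟩, by simpa using hmn⟩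
    · have hxn : x ≤ n := le_trans hx2 (Nat.div_le_self n 2)
      refine ⟨⟨by simp, ?_, ?_, ?_⟩, by simpa using hmx⟩
      · intro z hz
        rcases List.mem_cons.mp hz with rfl | hz
        · omega
        · exact hbpos z hz
      · rw [List.pairwise_cons]
        refine ⟨fun z hz => ?_, hbsort⟩
        match b with
        | [] => exact absurd rfl hbne
        | c :: d =>
          simp only [List.head!] at hbhead
          rcases List.mem_cons.mp hz with rfl | hz
          · exact hbhead
          · exact le_trans hbhead ((List.pairwise_cons.mp hbsort).1 z hz)
      · simp only [List.sum_cons, hbsum]; omega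

theorem stmt_0 (n m : ℕ) (hm : 1 ≤ m) (hmn : m ≤ n) :
    nac n m = 1 + ∑ x ∈ Finset.Icc m (n / 2), nac (n - x) x := by
  have hfin : ∀ x ∈ Finset.Icc m (n / 2), ((x :: ·) '' sac (n - x) x).Finite :=
    fun x _ => (sac_finite (n - x) x).image _
  have hUfin : (⋃ x ∈ Finset.Icc m (n / 2), (x :: ·) '' sac (n - x) x).Finite :=
    Set.Finite.biUnion (Finset.finite_toSet _) hfin
  have hnotmem : [n] ∉ ⋃ x ∈ Finset.Icc m (n / 2), (x :: ·) '' sac (n - x) x := by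
    simp only [Set.mem_iUnion, Set.mem_image]
    rintro ⟨x, hx, b, hb, heq⟩
    exact hb.1.1 (List.cons_eq_cons.mp heq).2
  rw [nac, sac_eq n m hm hmn, Set.ncard_insert_of_notMem hnotmem hUfin,
    aux_ncard_biUnion _ _ hfin ?_, add_comm]
  · congr 1
    refine Finset.sum_congr rfl fun x hx => ?_
    rw [Set.ncard_image_of_injective _ (fun a b h => by injection h)]
    rfl
  · intro x hx y hy hxy
    rw [Set.disjoint_left]
    rintro a ⟨b, -, rfl⟩ ⟨c, -, hc⟩
    injection hc with h1 _
    exact hxy h1.symm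
end

section
/- For all positive integers m ≤ n, the number of terminal ascending compositions of n whose first part is at least m satisfies the recurrence ntac(n,m) = 1 + ∑_{x=m}^{⌊n/3⌋} ntac(n−x, x) (the sum being empty when m > ⌊n/3⌋). -/
/-- A (nonempty) composition `⟨a_1, …, a_k⟩` is terminal if `k = 1` or `2·a_{k-1} ≤ a_k`. -/
def IsTerminal (a : List ℕ) : Prop :=
  a.length = 1 ∨ (2 ≤ a.length ∧ 2 * a[a.length - 2]! ≤ a[a.length - 1]!)

/-- `ntac n m`: the number of terminal ascending compositions of `n`
whose first part is at least `m`. -/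
noncomputable def ntac (n m : ℕ) : ℕ :=
  Set.ncard {a : List ℕ | IsAscComp n a ∧ m ≤ a.head! ∧ IsTerminal a}

namespace NtacAux

def S (n m : ℕ) : Set (List ℕ) :=
  {a : List ℕ | IsAscComp n a ∧ m ≤ a.head! ∧ IsTerminal a}

lemma hfin (n m : ℕ) : (S n m).Finite := by
  have : S n m ⊆ Set.range (fun c : Composition n => c.blocks) := by
    rintro a ⟨⟨-, hpos, -, hsum⟩, -⟩
    exact ⟨⟨a, fun hi => hpos _ hi, hsum⟩, rfl⟩
  exact (Set.finite_range _).subset this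

lemma terminal_pair (x y : ℕ) : IsTerminal [x, y] ↔ 2 * x ≤ y := by
  simp [IsTerminal]

lemma terminal_single (x : ℕ) : IsTerminal [x] := Or.inl rfl

lemma terminal_cons (x : ℕ) (b : List ℕ) (hb : 2 ≤ b.length) :
    IsTerminal (x :: b) ↔ IsTerminal b := by
  obtain ⟨k, hk⟩ : ∃ k, b.length = k + 2 := ⟨b.length - 2, by omega⟩
  have e1 : (x :: b).length - 2 = k + 1 := by simp [hk]
  have e2 : (x :: b).length - 1 = k + 2 := by simp [hk]
  have e3 : b.length - 2 = k := by omega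
  have e4 : b.length - 1 = k + 1 := by omega
  rw [IsTerminal, IsTerminal, e1, e2, e3, e4]
  simp [List.getElem!_cons_succ, hk]

lemma head_le (b : List ℕ) (hs : b.Pairwise (· ≤ ·)) {y : ℕ} (hy : y ∈ b) :
    b.head! ≤ y := by
  cases b with
  | nil => cases hy
  | cons c t =>
    rw [List.pairwise_cons] at hs
    rcases List.mem_cons.1 hy with rfl | h
    · simp
    · simpa using hs.1 _ h

lemma sum_ge (b : List ℕ) {y : ℕ} (hy : y ∈ b) : y ≤ b.sum :=
  List.single_le_sum (fun _ _ => Nat.zero_le _) _ hy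

lemma last_mem (b : List ℕ) (hb : b ≠ []) : b[b.length - 1]! ∈ b := by
  have h : b.length - 1 < b.length := by
    cases b with
    | nil => simp at hb
    | cons c t => simp
  rw [getElem!_pos b _ h]
  exact List.getElem_mem h

lemma key (n m : ℕ) (hm : 1 ≤ m) (hmn : m ≤ n) :
    S n m = insert [n] (⋃ x ∈ Finset.Icc m (n / 3), (fun b => x :: b) '' S (n - x) x) := by
  ext a
  simp only [Set.mem_insert_iff, Set.mem_iUnion, Set.mem_image, Finset.mem_Icc, exists_prop]
  constructor
  · rintro ⟨⟨hne, hpos, hsort, hsum⟩, hhead, hterm⟩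
    rcases a with - | ⟨x, b⟩
    · exact absurd rfl hne
    rcases eq_or_ne b [] with rfl | hbne
    · left
      simp at hsum
      rw [hsum]
    right
    have hblen : 1 ≤ b.length := List.length_pos_iff.2 hbne
    have hxb : m ≤ x := by simpa using hhead
    have hsort' : b.Pairwise (· ≤ ·) := (List.pairwise_cons.1 hsort).2
    have hxall : ∀ y ∈ b, x ≤ y := (List.pairwise_cons.1 hsort).1
    have hlen : (x :: b).length = b.length + 1 := rfl
    have hterm2 : 2 * (x :: b)[(x :: b).length - 2]! ≤ (x :: b)[(x :: b).length - 1]! := by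
      rcases hterm with h1 | h2
      · rw [hlen] at h1; omega
      · exact h2.2
    have hlast : 2 * x ≤ b[b.length - 1]! := by
      rcases Nat.lt_or_ge b.length 2 with h2 | h2
      · have h1 : b.length = 1 := by omega
        obtain ⟨y, rfl⟩ := List.length_eq_one_iff.1 h1
        simpa using hterm2
      · obtain ⟨k, hk⟩ : ∃ k, b.length = k + 2 := ⟨b.length - 2, by omega⟩
        have e1 : (x :: b).length - 2 = k + 1 := by rw [hlen, hk]; omega
        have e2 : (x :: b).length - 1 = k + 2 := by rw [hlen, hk]; omega
        rw [e1, e2, List.getElem!_cons_succ, List.getElem!_cons_succ] at hterm2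
        have hpre : x ≤ b[k]! := by
          have hklt : k < b.length := by omega
          have : b[k]! ∈ b := by rw [getElem!_pos b _ hklt]; exact List.getElem_mem hklt
          exact hxall _ this
        have e3 : b.length - 1 = k + 1 := by omega
        rw [e3]
        omega
    have hsum' : x + b.sum = n := by simpa using hsum
    have h3x : 3 * x ≤ n := by
      have hmem := last_mem b hbne
      have hge := sum_ge b hmem
      omega
    refine ⟨x, ⟨hxb, ?_⟩, b, ⟨⟨hbne, fun y hy => hpos y (List.mem_cons_of_mem _ hy),
      hsort', by omega⟩, ?_, ?_⟩, rfl⟩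
    · rw [Nat.le_div_iff_mul_le (by norm_num)]; omega
    · have : b.head! ∈ b := List.head!_mem_self hbne
      exact hxall _ this
    · rcases Nat.lt_or_ge b.length 2 with h2 | h2
      · left; omega
      · refine (terminal_cons x b h2).1 ?_
        rcases hterm with h1 | hh
        · rw [hlen] at h1; omega
        · exact Or.inr ⟨by rw [hlen]; omega, hh.2⟩
  · rintro (rfl | ⟨x, ⟨hmx, hx3⟩, b, ⟨⟨hbne, hbpos, hbsort, hbsum⟩, hbhead, hbterm⟩, rfl⟩)
    · exact ⟨⟨by simp, by intro y hy; simp at hy; omega, by simp, by simp⟩,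
        by simpa using hmn, terminal_single n⟩
    · have h3x : 3 * x ≤ n := by
        rw [Nat.le_div_iff_mul_le (by norm_num)] at hx3; omega
      have hxall : ∀ y ∈ b, x ≤ y := fun y hy => le_trans hbhead (head_le b hbsort hy)
      have hxpos : 0 < x := lt_of_lt_of_le hm hmx
      refine ⟨⟨by simp, ?_, List.pairwise_cons.2 ⟨hxall, hbsort⟩, ?_⟩, by simpa using hmx, ?_⟩
      · intro y hy
        rcases List.mem_cons.1 hy with rfl | h
        · exact hxpos
        · exact hbpos y h
      · simp [hbsum]; omega
      · rcases Nat.lt_or_ge b.length 2 with h2 | h2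
        · have h1 : b.length = 1 := by
            have := List.length_pos_iff.2 hbne; omega
          obtain ⟨y, rfl⟩ := List.length_eq_one_iff.1 h1
          have hy : y = n - x := by simpa using hbsum
          rw [terminal_pair]
          omega
        · exact (terminal_cons x b h2).2 hbterm

end NtacAux

open NtacAux in
theorem stmt_1 (n m : ℕ) (hm : 1 ≤ m) (hmn : m ≤ n) :
    ntac n m = 1 + ∑ x ∈ Finset.Icc m (n / 3), ntac (n - x) x := by
  have hU : (⋃ x ∈ Finset.Icc m (n / 3), (fun b => x :: b) '' S (n - x) x).Finite :=
    Set.Finite.biUnion (Finset.finite_toSet _) (fun x _ => (hfin (n - x) x).image _)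
  have hnotmem : [n] ∉ ⋃ x ∈ Finset.Icc m (n / 3), (fun b => x :: b) '' S (n - x) x := by
    simp only [Set.mem_iUnion, Set.mem_image, not_exists]
    rintro x hx b ⟨⟨⟨hbne, -⟩, -⟩, heq⟩
    have : b = [] := by
      have := congrArg List.tail heq
      simpa using this
    exact hbne this
  have main : ntac n m = 1 + (⋃ x ∈ Finset.Icc m (n / 3),
      (fun b => x :: b) '' S (n - x) x).ncard := by
    show (S n m).ncard = _
    rw [key n m hm hmn, Set.ncard_insert_of_notMem hnotmem hU]
    omega
  rw [main]
  congr 1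
  classical
  have hcard : ∀ x ∈ Finset.Icc m (n / 3),
      ((fun b => x :: b) '' S (n - x) x).ncard = ntac (n - x) x := by
    intro x _
    rw [Set.ncard_image_of_injective _ (List.cons_injective)]
    rfl
  rw [← Finset.sum_congr rfl hcard]
  induction (Finset.Icc m (n / 3)) using Finset.induction with
  | empty => simp
  | insert x s hxs ih =>
    rw [Finset.sum_insert hxs]
    have hrw : (⋃ y ∈ insert x s, (fun b => y :: b) '' S (n - y) y)
        = ((fun b => x :: b) '' S (n - x) x) ∪ ⋃ y ∈ s, (fun b => y :: b) '' S (n - y) y := by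
      simp [Set.biUnion_insert]
    have hdisj : Disjoint ((fun b => x :: b) '' S (n - x) x)
        (⋃ y ∈ s, (fun b => y :: b) '' S (n - y) y) := by
      rw [Set.disjoint_left]
      rintro a ⟨b, -, rfl⟩ ha
      simp only [Set.mem_iUnion, Set.mem_image] at ha
      obtain ⟨y, hy, c, -, heq⟩ := ha
      have hxy : x = y := (List.cons_eq_cons.1 heq.symm).1
      exact hxs (hxy ▸ hy)
    rw [hrw, Set.ncard_union_eq hdisj ((hfin (n - x) x).image _)
      (Set.Finite.biUnion (Finset.finite_toSet _) (fun y _ => (hfin (n - y) y).image _)), ih]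
end

section
/- For positive integers m ≤ n, if 2m > n then the lexicographically least element of sac(n,m) is the singleton sequence ⟨n⟩, and if 2m ≤ n then the lexicographically least element of sac(n,m) is obtained by prepending m to the lexicographically least element of sac(n−m, m). -/
/-- Comparing compositions in lexicographic order (the order on `List ℕ`),
if `2m > n` then the least element of `sac n m` is `[n]`, and if `2m ≤ n` then
the least element of `sac n m` is obtained by prepending `m` to the least element
of `sac (n - m) m`. -/
theorem stmt_2 (n m : ℕ) (hm : 1 ≤ m) (hmn : m ≤ n) :
    (n < 2 * m → IsLeast (sac n m) [n]) ∧
    (2 * m ≤ n → ∀ L : List ℕ, IsLeast (sac (n - m) m) L → IsLeast (sac n m) (m :: L)) := by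
  constructor
  · intro h
    constructor
    · refine ⟨⟨by simp, by simpa using lt_of_lt_of_le hm hmn, by simp, by simp⟩, by simpa using hmn⟩
    · rintro a ⟨⟨hne, hpos, hsort, hsum⟩, hhead⟩
      obtain ⟨x, rest, rfl⟩ := List.exists_cons_of_ne_nil hne
      simp only [List.head!_cons] at hhead
      rcases rest with _ | ⟨y, rest⟩
      · simp only [List.sum_cons, List.sum_nil, add_zero] at hsum
        subst hsum; exact le_rfl
      · exfalso
        rw [List.pairwise_cons] at hsort
        have hxy : x ≤ y := hsort.1 y (by simp)
        have : 2 * m ≤ n := by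
          rw [← hsum]
          have : rest.sum ≥ 0 := Nat.zero_le _
          simp only [List.sum_cons]
          omega
        omega
  · intro h L hL
    obtain ⟨⟨⟨hLne, hLpos, hLsort, hLsum⟩, hLhead⟩, hLlb⟩ := hL
    obtain ⟨y, L', rfl⟩ := List.exists_cons_of_ne_nil hLne
    simp only [List.head!_cons] at hLhead
    constructor
    · refine ⟨⟨by simp, ?_, ?_, ?_⟩, by simp⟩
      · rintro x hx
        rcases List.mem_cons.mp hx with rfl | hx
        · omega
        · exact hLpos _ (by simpa using hx)
      · rw [List.pairwise_cons]
        refine ⟨?_, hLsort⟩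
        intro b hb
        rcases List.mem_cons.mp hb with rfl | hb
        · exact hLhead
        · rw [List.pairwise_cons] at hLsort
          exact le_trans hLhead (hLsort.1 b (by simpa using hb))
      · simp only [List.sum_cons] at hLsum ⊢
        omega
    · rintro a ⟨⟨hne, hpos, hsort, hsum⟩, hhead⟩
      obtain ⟨x, rest, rfl⟩ := List.exists_cons_of_ne_nil hne
      simp only [List.head!_cons] at hhead
      rcases eq_or_lt_of_le hhead with heq | hlt
      · subst heq
        rcases rest with _ | ⟨z, rest⟩
        · exfalso
          simp only [List.sum_cons, List.sum_nil, add_zero] at hsum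
          omega
        · apply List.cons_le_cons
          have hrest : (z :: rest) ∈ sac (n - m) m := by
            rw [List.pairwise_cons] at hsort
            refine ⟨⟨by simp, fun b hb => hpos b (by simp [hb]), hsort.2, ?_⟩, ?_⟩
            · simp only [List.sum_cons] at hsum ⊢; omega
            · simpa using hsort.1 z (by simp)
          -- need lower bound property applied to hrest
          exact hLlb hrest
      · exact le_of_lt (List.Lex.rel hlt)
end

section
/- For all positive integers m ≤ n, the lexicographically least element of sac(n,m) is the sequence consisting of μ copies of m followed by the single part n − μm, where μ = ⌊n/m⌋ − 1. -/
lemma lex_aux (m : ℕ) (hm : 1 ≤ m) :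
    ∀ (μ s : ℕ) (a : List ℕ), (∀ x ∈ a, m ≤ x) → a.Pairwise (· ≤ ·) →
      a.sum = μ * m + s → m ≤ s → s < 2 * m →
      ¬ List.Lex (· < ·) a (List.replicate μ m ++ [s]) := by
  intro μ
  induction μ with
  | zero =>
    intro s a hall hsort hsum hs1 hs2 h
    simp only [List.replicate_zero, List.nil_append] at h
    cases h with
    | nil => simp at hsum; omega
    | @cons b t _ h' => exact absurd h' (by rintro (_ | _))
    | @rel b t _ h' =>
      -- b < s, but b + t.sum = s, elements of t ≥ m
      have hb : m ≤ b := hall b (by simp)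
      have hsum' : b + t.sum = 0 * m + s := by simpa using hsum
      rcases t with _ | ⟨c, t'⟩
      · simp at hsum'; omega
      · have hc : m ≤ c := hall c (by simp)
        have : c ≤ (c :: t').sum := List.single_le_sum (fun x _ => Nat.zero_le x) c (by simp)
        simp at hsum'
        omega
  | succ μ ih =>
    intro s a hall hsort hsum hs1 hs2 h
    rw [List.replicate_succ, List.cons_append] at h
    cases h with
    | nil => simp at hsum; omega
    | @cons b t _ h' =>
      -- b = m (from pattern), t lex-less than replicate μ m ++ [s]
      have hsum' : m + t.sum = μ * m + m + s := by
        have h2 : (m :: t).sum = (μ + 1) * m + s := hsum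
        rw [List.sum_cons, Nat.add_mul, one_mul] at h2
        omega
      refine ih s t (fun x hx => hall x (List.mem_cons_of_mem _ hx))
        (hsort.of_cons) (by omega) hs1 hs2 h'
    | @rel b t _ h' =>
      have hb : m ≤ b := hall b (by simp)
      omega

/-- In lexicographic order (the order on `List ℕ`), the least element of `sac n m`
consists of `μ = ⌊n/m⌋ - 1` copies of `m` followed by the single part `n - μ·m`. -/
theorem stmt_3 (n m : ℕ) (hm : 1 ≤ m) (hmn : m ≤ n) :
    IsLeast (sac n m)
      (List.replicate (n / m - 1) m ++ [n - (n / m - 1) * m]) := by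
  have hq : 1 ≤ n / m := (Nat.one_le_div_iff hm).mpr hmn
  have hr : n % m < m := Nat.mod_lt _ hm
  have h1 : (n / m - 1) * m + m = (n / m) * m := by
    conv_rhs => rw [← Nat.sub_add_cancel hq]
    rw [Nat.add_mul, one_mul]
  have key : (n / m - 1) * m + m + n % m = n := by
    rw [h1, mul_comm]
    exact Nat.div_add_mod n m
  set A := (n / m - 1) * m with hA
  set B := n % m with hB
  have hs1 : m ≤ n - A := by omega
  have hs2 : n - A < 2 * m := by omega
  have hs3 : A + (n - A) = n := by omega
  constructor
  · refine ⟨⟨by simp, ?_, ?_, ?_⟩, ?_⟩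
    · intro x hx
      simp only [List.mem_append, List.mem_replicate, List.mem_singleton] at hx
      rcases hx with ⟨_, rfl⟩ | rfl <;> omega
    · rw [List.pairwise_append]
      refine ⟨List.pairwise_replicate.mpr (Or.inr le_rfl), by simp, ?_⟩
      intro x hx y hy
      rw [List.mem_replicate] at hx
      rw [List.mem_singleton] at hy
      omega
    · rw [List.sum_append, List.sum_replicate, smul_eq_mul, List.sum_singleton]
      omega
    · rcases Nat.eq_zero_or_pos (n / m - 1) with h0 | hpos
      · rw [h0]
        simp only [List.replicate_zero, List.nil_append, List.head!]
        omega
      · rw [← Nat.succ_pred_eq_of_pos hpos, List.replicate_succ]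
        simp
  · intro a ⟨⟨hne, hpos, hsort, hsum⟩, hhead⟩
    have hall : ∀ x ∈ a, m ≤ x := by
      rcases a with _ | ⟨b, t⟩
      · simp
      · intro x hx
        rcases List.mem_cons.mp hx with rfl | hx'
        · simpa using hhead
        · have hb : m ≤ b := by simpa using hhead
          have := List.rel_of_pairwise_cons hsort hx'
          omega
    have := lex_aux m hm (n / m - 1) (n - A) a hall hsort (by omega) hs1 hs2
    exact le_of_not_gt this
end

section
/- Let ⟨a_1,…,a_k⟩ be an ascending composition of n with k ≥ 2 (i.e. distinct from the singleton ⟨n⟩). Set m = a_{k−1} + 1, n' = a_{k−1} + a_k, and μ = ⌊n'/m⌋ − 1. Then the immediate lexicographic successor of ⟨a_1,…,a_k⟩ among all ascending compositions of n is the sequence ⟨a_1,…,a_{k−2}⟩ followed by μ copies of m and then the single part n' − μm. -/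
private lemma lex_append_left' {r : ℕ → ℕ → Prop} :
    ∀ (pre l l' : List ℕ), List.Lex r l l' → List.Lex r (pre ++ l) (pre ++ l')
  | [], _, _, h => h
  | _ :: pre, l, l', h => List.Lex.cons (lex_append_left' pre l l' h)

private lemma sorted_replicate' (μ m : ℕ) : (List.replicate μ m).Pairwise (· ≤ ·) := by
  induction μ with
  | zero => simp
  | succ ν ih =>
    rw [List.replicate_succ]
    exact List.pairwise_cons.mpr
      ⟨fun x hx => le_of_eq (List.eq_of_mem_replicate hx).symm, ih⟩

/-- Among sorted lists with all entries `≥ m` and fixed sum, the list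
`replicate (S/m - 1) m ++ [S - (S/m-1)*m]` is lexicographically least. -/
private lemma tail_min (m : ℕ) (hm : 0 < m) :
    ∀ t : List ℕ, t ≠ [] → t.Pairwise (· ≤ ·) → (∀ x ∈ t, m ≤ x) →
      List.replicate (t.sum / m - 1) m ++ [t.sum - (t.sum / m - 1) * m] ≤ t := by
  intro t
  induction t with
  | nil => intro h; exact absurd rfl h
  | cons x t' ih =>
    intro _ hsort hge
    have hx : m ≤ x := hge x List.mem_cons_self
    cases t' with
    | nil =>
      simp only [List.sum_cons, List.sum_nil, Nat.add_zero]
      rcases Nat.eq_zero_or_pos (x / m - 1) with h0 | h1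
      · rw [h0]; simp
      · obtain ⟨μ', hμ'⟩ : ∃ μ', x / m - 1 = μ' + 1 := ⟨x / m - 2, by omega⟩
        have hdm : (x / m) * m ≤ x := Nat.div_mul_le_self x m
        have h2 : 2 ≤ x / m := by omega
        have hlt : m < x := by nlinarith
        rw [hμ', List.replicate_succ, List.cons_append]
        exact le_of_lt (show _ < _ from List.Lex.rel hlt)
    | cons z t'' =>
      have hz : m ≤ z := hge z (by simp)
      have hTc : (z :: t'').sum = z + t''.sum := List.sum_cons
      have hT : m ≤ (z :: t'').sum := by omega
      set T : ℕ := (z :: t'').sum with hTdef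
      have hsum : (x :: z :: t'').sum = x + T := List.sum_cons
      rcases lt_or_eq_of_le hx with hlt | heq
      · -- x > m : head of our list is m < x
        have h2 : 2 ≤ (x + T) / m := (Nat.le_div_iff_mul_le hm).mpr (by omega)
        obtain ⟨μ', hμ'⟩ : ∃ μ', (x + T) / m - 1 = μ' + 1 := ⟨(x + T) / m - 2, by omega⟩
        rw [hsum, hμ', List.replicate_succ, List.cons_append]
        exact le_of_lt (show _ < _ from List.Lex.rel hlt)
      · -- x = m : recurse
        have hdiv : (x + T) / m = T / m + 1 := by
          rw [Nat.add_comm x T, ← heq, Nat.add_div_right _ (by omega)]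
        have hd1 : 1 ≤ T / m := (Nat.one_le_div_iff hm).mpr hT
        have hdm : (T / m) * m ≤ T := Nat.div_mul_le_self T m
        have hmul : (T / m - 1) * m + m = (T / m) * m := by
          have h9 : T / m - 1 + 1 = T / m := by omega
          calc (T / m - 1) * m + m = (T / m - 1 + 1) * m := by ring
          _ = (T / m) * m := by rw [h9]
        have hrep : (x + T) / m - 1 = (T / m - 1) + 1 := by omega
        have hval : x + T - ((x + T) / m - 1) * m = T - (T / m - 1) * m := by
          rw [hrep]
          have h8 : (T / m - 1 + 1) * m = (T / m - 1) * m + m := by ring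
          omega
        rw [hsum, hval, hrep, List.replicate_succ, List.cons_append, ← heq]
        exact List.cons_le_cons m
          (ih (by simp) hsort.of_cons (fun y hy => hge y (by simp [hy])))

/-- Minimality: any positive sorted list `b` lexicographically above `c ++ [p, q]`
with the same sum is at least the claimed successor. -/
private lemma main_min :
    ∀ (c : List ℕ) (p q : ℕ) (b : List ℕ),
      (∀ x ∈ c ++ [p, q], 0 < x) →
      b.Pairwise (· ≤ ·) → (∀ x ∈ b, 0 < x) → b.sum = (c ++ [p, q]).sum →
      List.Lex (· < ·) (c ++ [p, q]) b →
      c ++ List.replicate ((p + q) / (p + 1) - 1) (p + 1)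
        ++ [(p + q) - ((p + q) / (p + 1) - 1) * (p + 1)] ≤ b := by
  intro c
  induction c with
  | nil =>
    intro p q b hpos hbsort hbpos hbsum hlex
    simp only [List.nil_append] at hpos hbsum hlex ⊢
    have hq : 0 < q := hpos q (by simp)
    have hp : 0 < p := hpos p (by simp)
    cases hlex with
    | rel hpy =>
      rename_i y b''
      have hge : ∀ x ∈ y :: b'', p + 1 ≤ x := by
        intro x hx
        rcases List.mem_cons.mp hx with rfl | hx'
        · omega
        · have := (List.pairwise_cons.mp hbsort).1 x hx'
          omega
      have hsum' : (y :: b'').sum = p + q := by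
        simpa using hbsum
      have := tail_min (p + 1) (by omega) (y :: b'') (by simp) hbsort hge
      rw [hsum'] at this
      simpa using this
    | cons h' =>
      rename_i b'
      exfalso
      have hbsum' : b'.sum = q := by
        simp [List.sum_cons] at hbsum
        omega
      cases h' with
      | rel hqz =>
        rename_i z b''
        simp [List.sum_cons] at hbsum'
        omega
      | cons h'' =>
        rename_i b''
        cases h'' with
        | nil =>
          rename_i w b'''
          have hw : 0 < w := hbpos w (by simp)
          simp [List.sum_cons] at hbsum'
          omega
  | cons x c' ih =>
    intro p q b hpos hbsort hbpos hbsum hlex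
    rw [List.cons_append] at hlex
    cases hlex with
    | rel hxy =>
      refine le_of_lt (show _ < _ from ?_)
      rw [List.cons_append, List.cons_append]
      exact List.Lex.rel hxy
    | cons h' =>
      rename_i b'
      rw [List.cons_append] at hpos hbsum
      have hbsum' : b'.sum = (c' ++ [p, q]).sum := by
        simp only [List.sum_cons] at hbsum
        omega
      have := ih p q b' (fun y hy => hpos y (by simp [hy]))
        (List.pairwise_cons.mp hbsort).2 (fun y hy => hbpos y (by simp [hy])) hbsum' h'
      rw [List.cons_append, List.cons_append]
      exact List.cons_le_cons x this

/-- For an ascending composition `⟨a_1, …, a_k⟩` of `n` with `k ≥ 2`, setting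
`m = a_{k-1} + 1`, `n' = a_{k-1} + a_k` and `μ = ⌊n'/m⌋ - 1`, its immediate
lexicographic successor among all ascending compositions of `n` (i.e. the least
ascending composition of `n` strictly greater than it in the lexicographic order
on `List ℕ`) is `⟨a_1, …, a_{k-2}⟩` followed by `μ` copies of `m` and then the
single part `n' - μ·m`. -/
theorem stmt_4 (n : ℕ) (a : List ℕ) (ha : IsAscComp n a) (hk : 2 ≤ a.length)
    (m n' μ : ℕ)
    (hm : m = a[a.length - 2]! + 1)
    (hn' : n' = a[a.length - 2]! + a[a.length - 1]!)
    (hμ : μ = n' / m - 1) :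
    IsLeast {b : List ℕ | IsAscComp n b ∧ a < b}
      (a.take (a.length - 2) ++ List.replicate μ m ++ [n' - μ * m]) := by
  obtain ⟨hne, hpos, hsort, hsum⟩ := ha
  have h2 : a.length - 2 < a.length := by omega
  have h1 : a.length - 1 < a.length := by omega
  set p : ℕ := a[a.length - 2]'h2 with hp
  set q : ℕ := a[a.length - 1]'h1 with hq
  have hmp : m = p + 1 := by rw [hm, getElem!_pos a _ h2]
  have hn'pq : n' = p + q := by rw [hn', getElem!_pos a _ h2, getElem!_pos a _ h1]
  set c : List ℕ := a.take (a.length - 2) with hc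
  have hdecomp : a = c ++ [p, q] := by
    have h3 : a.drop (a.length - 2) = p :: a.drop (a.length - 1) := by
      have := List.drop_eq_getElem_cons (l := a) h2
      rwa [show a.length - 2 + 1 = a.length - 1 by omega] at this
    have h4 : a.drop (a.length - 1) = q :: a.drop a.length :=
      (List.drop_eq_getElem_cons (l := a) h1).trans
        (by rw [show a.length - 1 + 1 = a.length by omega])
    have h5 : a.drop a.length = [] := List.drop_length
    conv_lhs => rw [← List.take_append_drop (a.length - 2) a]
    rw [h3, h4, h5]
  have hppos : 0 < p := hpos p (by rw [hdecomp]; simp)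
  have hqpos : 0 < q := hpos q (by rw [hdecomp]; simp)
  -- arithmetic facts
  have hmpos : 0 < m := by omega
  have hmn' : m ≤ n' := by omega
  have hd1 : 1 ≤ n' / m := (Nat.one_le_div_iff hmpos).mpr hmn'
  have hdm : (n' / m) * m ≤ n' := Nat.div_mul_le_self n' m
  have hμ1 : μ + 1 = n' / m := by omega
  have hμm : μ * m + m ≤ n' := by
    have e2 : μ * m + m = (μ + 1) * m := by ring
    rw [e2, hμ1]; exact hdm
  -- facts about c
  have hcsort : c.Pairwise (· ≤ ·) ∧ ∀ x ∈ c, ∀ y ∈ [p, q], x ≤ y := by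
    rw [hdecomp] at hsort
    have h := List.pairwise_append.mp hsort
    exact ⟨h.1, h.2.2⟩
  have hcsum : c.sum + (p + q) = n := by
    rw [hdecomp] at hsum
    simpa [List.sum_append] using hsum
  constructor
  · -- membership
    refine ⟨⟨by simp, ?_, ?_, ?_⟩, ?_⟩
    · -- positivity
      intro x hx
      rw [List.append_assoc, List.mem_append] at hx
      rcases hx with hx | hx
      · exact hpos x (by rw [hdecomp]; exact List.mem_append_left _ hx)
      · rw [List.mem_append] at hx
        rcases hx with hx | hx
        · rw [List.eq_of_mem_replicate hx]; omega
        · rw [List.mem_singleton.mp hx]; omega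
    · -- sorted
      rw [List.append_assoc]
      refine List.pairwise_append.mpr ⟨hcsort.1, ?_, ?_⟩
      · refine List.pairwise_append.mpr
          ⟨sorted_replicate' μ m, List.pairwise_singleton _ _, ?_⟩
        intro x hx y hy
        rw [List.eq_of_mem_replicate hx, List.mem_singleton.mp hy]
        omega
      · intro x hx y hy
        have hxp : x ≤ p := hcsort.2 x hx p (by simp)
        rw [List.mem_append] at hy
        rcases hy with hy | hy
        · rw [List.eq_of_mem_replicate hy]; omega
        · rw [List.mem_singleton.mp hy]; omega
    · -- sum
      rw [List.append_assoc, List.sum_append, List.sum_append,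
        List.sum_replicate, smul_eq_mul, List.sum_cons, List.sum_nil]
      omega
    · -- a < s
      rw [hdecomp, List.append_assoc]
      refine show _ < _ from lex_append_left' c _ _ ?_
      rcases Nat.eq_zero_or_pos μ with h0 | h1
      · subst h0
        simp only [List.replicate_zero, List.nil_append, Nat.zero_mul, Nat.sub_zero]
        exact List.Lex.rel (by omega)
      · obtain ⟨ν, rfl⟩ : ∃ ν, μ = ν + 1 := ⟨μ - 1, by omega⟩
        rw [List.replicate_succ, List.cons_append]
        exact List.Lex.rel (by omega)
  · -- lower bound
    rintro b ⟨⟨hbne, hbpos, hbsort, hbsum⟩, hab⟩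
    rw [hdecomp] at hab
    have hlex : List.Lex (· < ·) (c ++ [p, q]) b := hab
    have hbsum' : b.sum = (c ++ [p, q]).sum := by
      rw [hbsum, ← hsum, hdecomp]
    have hmain := main_min c p q b
      (fun x hx => hpos x (by rw [hdecomp]; exact hx)) hbsort hbpos hbsum' hlex
    have e1 : μ = (p + q) / (p + 1) - 1 := by rw [hμ, hn'pq, hmp]
    have e2 : n' - μ * m = (p + q) - ((p + q) / (p + 1) - 1) * (p + 1) := by
      rw [hn'pq, hmp, e1]
    rw [e2, e1, hmp]
    exact hmain
end

section
/- Let T(n,m) be defined for positive integers m ≤ n by T(n,n) = T(n,1) = 1 and, for 1 < m < n, T(n,m) = 1 + ∑_{x=1}^{min(m, n−m)} T(n−m, x). Then for all positive integers n, m with 1 < m ≤ n, T(n,m) = D(n,m) + D(n−1,m). -/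
/-- `d` is a descending composition of `n`: a nonempty finite sequence of positive
integers in nonincreasing order summing to `n`. -/
def IsDescComp (n : ℕ) (d : List ℕ) : Prop :=
  d ≠ [] ∧ (∀ x ∈ d, 0 < x) ∧ d.Pairwise (· ≥ ·) ∧ d.sum = n

/-- `D n m`: the number of descending compositions of `n` whose first part equals `m`. -/
noncomputable def D (n m : ℕ) : ℕ :=
  Set.ncard {d : List ℕ | IsDescComp n d ∧ d.head! = m}

lemma descComp_finite (n : ℕ) : {d : List ℕ | IsDescComp n d}.Finite := by
  apply Set.Finite.of_finite_image (f := fun d : List ℕ => (↑d : Multiset ℕ))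
  · apply Set.Finite.subset (Set.finite_range (fun p : n.Partition => p.parts))
    rintro _ ⟨d, hd, rfl⟩
    exact ⟨⟨↑d, fun hx => hd.2.1 _ (by simpa using hx), by simpa using hd.2.2.2⟩, rfl⟩
  · intro a ha b hb hab
    exact List.Perm.eq_of_pairwise (fun a b _ _ h1 h2 => le_antisymm h2 h1) ha.2.2.1 hb.2.2.1 (Multiset.coe_eq_coe.mp hab)

lemma aux_finite (n m : ℕ) : {d : List ℕ | IsDescComp n d ∧ d.head! = m}.Finite :=
  (descComp_finite n).subset fun _ hd => hd.1

lemma le_head!_of_sorted {l : List ℕ} (h : l.Pairwise (· ≥ ·)) {a : ℕ} (ha : a ∈ l) :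
    a ≤ l.head! := by
  rw [← List.cons_head!_tail (List.ne_nil_of_mem ha)] at h ha
  rcases List.mem_cons.mp ha with rfl | h'
  · exact le_rfl
  · exact List.rel_of_pairwise_cons h h'

lemma head!_pos {n : ℕ} {d : List ℕ} (h : IsDescComp n d) : 0 < d.head! :=
  h.2.1 _ (List.head!_mem_self h.1)

lemma head!_le_n {n : ℕ} {d : List ℕ} (h : IsDescComp n d) : d.head! ≤ n := by
  obtain ⟨hne, _, _, hsum⟩ := h
  rw [← List.cons_head!_tail hne, List.sum_cons] at hsum
  omega

lemma D_self {n : ℕ} (hn : 1 ≤ n) : D n n = 1 := by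
  have hset : {d : List ℕ | IsDescComp n d ∧ d.head! = n} = {[n]} := by
    ext d
    simp only [Set.mem_setOf_eq, Set.mem_singleton_iff]
    constructor
    · rintro ⟨⟨hne, hpos, hsort, hsum⟩, hh⟩
      have hd : d = n :: d.tail := by rw [← hh]; exact (List.cons_head!_tail hne).symm
      rw [hd, List.sum_cons] at hsum
      have ht : d.tail.sum = 0 := by omega
      have htn : d.tail = [] := by
        cases htl : d.tail with
        | nil => rfl
        | cons b t =>
          have hb := hpos b (by rw [hd, htl]; simp)
          rw [htl, List.sum_cons] at ht; omega
      rw [hd, htn]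
    · rintro rfl
      refine ⟨⟨by simp, ?_, by simp, by simp⟩, by simp⟩
      intro x hx; simp at hx; omega
  rw [D, hset, Set.ncard_singleton]

lemma D_of_lt {n m : ℕ} (h : n < m) : D n m = 0 := by
  have hset : {d : List ℕ | IsDescComp n d ∧ d.head! = m} = ∅ := by
    ext d
    simp only [Set.mem_setOf_eq, Set.mem_empty_iff_false, iff_false, not_and]
    intro hd hh
    have := head!_le_n hd
    omega
  rw [D, hset, Set.ncard_empty]

lemma D_one {n : ℕ} (hn : 1 ≤ n) : D n 1 = 1 := by
  have hset : {d : List ℕ | IsDescComp n d ∧ d.head! = 1} = {List.replicate n 1} := by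
    ext d
    simp only [Set.mem_setOf_eq, Set.mem_singleton_iff]
    constructor
    · rintro ⟨⟨hne, hpos, hsort, hsum⟩, hh⟩
      have hall : ∀ b ∈ d, b = 1 := by
        intro b hb
        have h1 := le_head!_of_sorted hsort hb
        have h2 := hpos b hb
        omega
      have hrep : d = List.replicate d.length 1 := List.eq_replicate_of_mem hall
      have hlen : d.length = n := by
        rw [hrep] at hsum
        simpa using hsum
      rw [hrep, hlen]
    · rintro rfl
      obtain ⟨k, rfl⟩ : ∃ k, n = k + 1 := ⟨n - 1, by omega⟩
      refine ⟨⟨by simp, ?_, ?_, by simp⟩, by simp [List.replicate_succ]⟩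
      · intro x hx
        rw [List.eq_of_mem_replicate hx]
        omega
      · clear hn
        induction k with
        | zero => simp
        | succ j ihj =>
          rw [List.replicate_succ, List.pairwise_cons]
          exact ⟨fun b hb => (List.eq_of_mem_replicate hb).le, ihj⟩
  rw [D, hset, Set.ncard_singleton]

lemma D_rec {n m : ℕ} (h1 : 1 ≤ m) (h2 : m < n) :
    D n m = ∑ x ∈ Finset.Icc 1 (min m (n - m)), D (n - m) x := by
  classical
  have himg : List.tail '' {d : List ℕ | IsDescComp n d ∧ d.head! = m}
      = {d : List ℕ | IsDescComp (n - m) d ∧ d.head! ≤ m} := by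
    ext e
    simp only [Set.mem_image, Set.mem_setOf_eq]
    constructor
    · rintro ⟨d, ⟨⟨hne, hpos, hsort, hsum⟩, hh⟩, rfl⟩
      have hd : d = m :: d.tail := by rw [← hh]; exact (List.cons_head!_tail hne).symm
      have htne : d.tail ≠ [] := by
        intro h0
        rw [hd, h0] at hsum; simp at hsum; omega
      have hsort2 : (m :: d.tail).Pairwise (· ≥ ·) := by rw [← hd]; exact hsort
      refine ⟨⟨htne, fun x hx => hpos x (by rw [hd]; exact List.mem_cons_of_mem _ hx),
        hsort2.of_cons, ?_⟩, ?_⟩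
      · rw [hd, List.sum_cons] at hsum; omega
      · exact List.rel_of_pairwise_cons hsort2 (List.head!_mem_self htne)
    · rintro ⟨⟨hne, hpos, hsort, hsum⟩, hh⟩
      refine ⟨m :: e, ⟨⟨by simp, ?_, ?_, ?_⟩, by simp⟩, by simp⟩
      · intro x hx
        rcases List.mem_cons.mp hx with rfl | hx
        · omega
        · exact hpos x hx
      · rw [List.pairwise_cons]
        exact ⟨fun b hb => le_trans (le_head!_of_sorted hsort hb) hh, hsort⟩
      · rw [List.sum_cons, hsum]; omega
  have hinj : Set.InjOn List.tail {d : List ℕ | IsDescComp n d ∧ d.head! = m} := by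
    rintro d1 ⟨⟨hne1, _, _, _⟩, hh1⟩ d2 ⟨⟨hne2, _, _, _⟩, hh2⟩ he
    rw [← List.cons_head!_tail hne1, ← List.cons_head!_tail hne2, hh1, hh2, he]
  have hBfin : {d : List ℕ | IsDescComp (n - m) d ∧ d.head! ≤ m}.Finite :=
    (descComp_finite (n - m)).subset fun _ hd => hd.1
  have hcard : D n m = {d : List ℕ | IsDescComp (n - m) d ∧ d.head! ≤ m}.ncard := by
    rw [D, ← himg]
    exact (Set.ncard_image_of_injOn hinj).symm
  rw [hcard]
  have hBfinset : hBfin.toFinset = (Finset.Icc 1 (min m (n - m))).biUnion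
      (fun x => (aux_finite (n - m) x).toFinset) := by
    ext d
    simp only [Set.Finite.mem_toFinset, Finset.mem_biUnion, Finset.mem_Icc, Set.mem_setOf_eq]
    constructor
    · rintro ⟨hd, hh⟩
      exact ⟨d.head!, ⟨head!_pos hd, le_min hh (head!_le_n hd)⟩, hd, rfl⟩
    · rintro ⟨x, ⟨hx1, hx2⟩, hd, rfl⟩
      exact ⟨hd, le_trans hx2 (min_le_left _ _)⟩
  rw [Set.ncard_eq_toFinset_card _ hBfin, hBfinset, Finset.card_biUnion]
  · apply Finset.sum_congr rfl
    intro x _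
    rw [D, Set.ncard_eq_toFinset_card _ (aux_finite (n - m) x)]
  · intro x _ y _ hxy
    simp only [Finset.disjoint_left, Set.Finite.mem_toFinset, Set.mem_setOf_eq]
    rintro d ⟨_, rfl⟩ ⟨_, h⟩
    exact hxy h

/-- If `T` satisfies the recurrence `T(n,n) = T(n,1) = 1` and, for `1 < m < n`,
`T(n,m) = 1 + ∑_{x=1}^{min(m, n-m)} T(n-m, x)`, then for all `1 < m ≤ n` we have
`T(n,m) = D(n,m) + D(n-1,m)`. -/
theorem stmt_6 (T : ℕ → ℕ → ℕ)
    (hTnn : ∀ n : ℕ, 1 ≤ n → T n n = 1)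
    (hTn1 : ∀ n : ℕ, 1 ≤ n → T n 1 = 1)
    (hTrec : ∀ n m : ℕ, 1 < m → m < n →
      T n m = 1 + ∑ x ∈ Finset.Icc 1 (min m (n - m)), T (n - m) x)
    (n m : ℕ) (hm : 1 < m) (hmn : m ≤ n) :
    T n m = D n m + D (n - 1) m := by
  have key : ∀ n m : ℕ, 1 < m → m ≤ n → T n m = D n m + D (n - 1) m := by
    intro n
    induction n using Nat.strong_induction_on with
    | _ n ih =>
      intro m hm hmn
      rcases eq_or_lt_of_le hmn with rfl | hlt
      · rw [hTnn m (by omega), D_self (by omega), D_of_lt (by omega)]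
      · set k := n - m with hk
        have hk1 : 1 ≤ k := by omega
        have hkn : k < n := by omega
        set K := min m k with hK
        have hKk : K ≤ k := min_le_right _ _
        have hKm : K ≤ m := min_le_left _ _
        have hK1 : 1 ≤ K := by omega
        have hicc : Finset.Icc 1 K = insert 1 (Finset.Icc 2 K) := by
          ext x
          simp only [Finset.mem_Icc, Finset.mem_insert]
          omega
        have h1n : (1 : ℕ) ∉ Finset.Icc 2 K := by simp
        rw [hTrec n m hm hlt, ← hk, ← hK, hicc, Finset.sum_insert h1n,
          hTn1 k hk1]
        have hsum1 : ∑ x ∈ Finset.Icc 2 K, T k x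
            = ∑ x ∈ Finset.Icc 2 K, (D k x + D (k - 1) x) := by
          apply Finset.sum_congr rfl
          intro x hx
          simp only [Finset.mem_Icc] at hx
          exact ih k hkn x (by omega) (by omega)
        rw [hsum1]
        have hDn : D n m = 1 + ∑ x ∈ Finset.Icc 2 K, D k x := by
          rw [D_rec (by omega) hlt, ← hk, ← hK, hicc, Finset.sum_insert h1n, D_one hk1]
        have hDn1 : D (n - 1) m = 1 + ∑ x ∈ Finset.Icc 2 K, D (k - 1) x := by
          rcases eq_or_lt_of_le hk1 with hk1' | hk2
          · -- k = 1 : m = n - 1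
            have hmn1 : m = n - 1 := by omega
            have hKeq : K = 1 := by omega
            rw [← hmn1, D_self (by omega), hKeq]
            simp
          · -- k ≥ 2 : m < n - 1
            have hlt' : m < n - 1 := by omega
            have hn1m : n - 1 - m = k - 1 := by omega
            rw [D_rec (by omega) hlt', hn1m]
            have hicc' : Finset.Icc 1 (min m (k - 1)) = insert 1 (Finset.Icc 2 (min m (k - 1))) := by
              ext x
              simp only [Finset.mem_Icc, Finset.mem_insert]
              omega
            rw [hicc', Finset.sum_insert (by simp), D_one (by omega)]
            congr 1
            apply Finset.sum_subset
            · intro x hx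
              simp only [Finset.mem_Icc] at hx ⊢
              omega
            · intro x hx hx'
              simp only [Finset.mem_Icc] at hx hx'
              exact D_of_lt (by omega)
        rw [hDn, hDn1, Finset.sum_add_distrib]
        omega
  exact key n m hm hmn
end

section
/- Let T(n,m) be defined for positive integers m ≤ n by T(n,n) = T(n,1) = 1 and, for 1 < m < n, T(n,m) = 1 + ∑_{x=1}^{min(m, n−m)} T(n−m, x). Then for every integer n > 1, T(2n, n) = p(n) + p(n−1). -/
open Finset

private def Qc (k m : ℕ) : ℕ :=
  (Finset.univ.filter (fun p : Nat.Partition k => ∀ i ∈ p.parts, i ≤ m)).card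

private lemma mem_le_sum {s : Multiset ℕ} {a : ℕ} (h : a ∈ s) : a ≤ s.sum := by
  rw [← Multiset.cons_erase h, Multiset.sum_cons]; exact Nat.le_add_right _ _

private lemma Qc_eq_card {k m : ℕ} (h : k ≤ m) : Qc k m = Fintype.card (Nat.Partition k) := by
  rw [Qc, Finset.filter_true_of_mem, Finset.card_univ]
  intro p _ i hi
  exact le_trans (by rw [← p.parts_sum]; exact mem_le_sum hi) h

private lemma Qc_one_right (k : ℕ) : Qc k 1 = 1 := by
  rw [Qc, Finset.card_eq_one]
  refine ⟨⟨Multiset.replicate k 1, ?_, by simp⟩, ?_⟩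
  · intro i hi; rw [Multiset.eq_of_mem_replicate hi]; norm_num
  · ext p
    simp only [Finset.mem_filter, Finset.mem_univ, true_and, Finset.mem_singleton]
    constructor
    · intro hp
      have h1 : ∀ b ∈ p.parts, b = 1 := fun b hb =>
        le_antisymm (hp b hb) (p.parts_pos hb)
      have hcard : p.parts = Multiset.replicate p.parts.card 1 :=
        (Multiset.eq_replicate_card).mpr h1
      have : p.parts.card = k := by
        have := p.parts_sum
        rw [hcard] at this; simpa using this
      ext1
      rw [hcard, this]
    · rintro rfl; intro i hi; rw [Multiset.eq_of_mem_replicate hi]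

/-- bijection: partitions of k with max part exactly x ↔ partitions of k-x with parts ≤ x -/
private lemma card_maxpart (k x : ℕ) (hx : 1 ≤ x) (hxk : x ≤ k) :
    (Finset.univ.filter (fun p : Nat.Partition k => x ∈ p.parts ∧ ∀ i ∈ p.parts, i ≤ x)).card
      = Qc (k - x) x := by
  rw [Qc]
  refine Finset.card_bij'
    (fun p hp => (⟨p.parts.erase x,
      fun {i} hi => p.parts_pos (Multiset.mem_of_mem_erase hi),
      by
        have hp' : x ∈ p.parts := ((Finset.mem_filter.mp hp).2).1
        have := p.parts_sum
        have h2 : x + (p.parts.erase x).sum = k := by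
          rw [← Multiset.sum_cons, Multiset.cons_erase hp', this]
        omega⟩ : Nat.Partition (k - x)))
    (fun q hq => (⟨x ::ₘ q.parts,
      fun {i} hi => by
        rcases Multiset.mem_cons.mp hi with rfl | h
        · exact hx
        · exact q.parts_pos h,
      by rw [Multiset.sum_cons, q.parts_sum]; omega⟩ : Nat.Partition k))
    ?_ ?_ ?_ ?_
  · intro p hp
    simp only [Finset.mem_filter, Finset.mem_univ, true_and]
    intro i hi
    exact ((Finset.mem_filter.mp hp).2).2 i (Multiset.mem_of_mem_erase hi)
  · intro q hq
    simp only [Finset.mem_filter, Finset.mem_univ, true_and]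
    refine ⟨Multiset.mem_cons_self _ _, ?_⟩
    intro i hi
    rcases Multiset.mem_cons.mp hi with rfl | h
    · exact le_refl _
    · exact (Finset.mem_filter.mp hq).2 i h
  · intro p hp
    have hp' : x ∈ p.parts := ((Finset.mem_filter.mp hp).2).1
    ext1
    exact Multiset.cons_erase hp'
  · intro q hq
    ext1
    simp

private lemma Qc_rec (k m : ℕ) (hk : 1 ≤ k) (hm : 1 ≤ m) :
    Qc k m = ∑ x ∈ Finset.Icc 1 (min m k), Qc (k - x) x := by
  have hdecomp : (Finset.univ.filter (fun p : Nat.Partition k => ∀ i ∈ p.parts, i ≤ m))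
      = (Finset.Icc 1 (min m k)).biUnion (fun x =>
          Finset.univ.filter (fun p : Nat.Partition k => x ∈ p.parts ∧ ∀ i ∈ p.parts, i ≤ x)) := by
    ext p
    simp only [Finset.mem_filter, Finset.mem_univ, true_and, Finset.mem_biUnion, Finset.mem_Icc]
    constructor
    · intro hp
      -- p.parts is nonempty since k ≥ 1
      have hne : p.parts ≠ 0 := by
        intro h
        have := p.parts_sum
        rw [h] at this; simp at this; omega
      obtain ⟨a, ha⟩ := Multiset.exists_mem_of_ne_zero hne
      -- take the max part
      obtain ⟨x, hxmem, hxmax⟩ := p.parts.toFinset.exists_max_image id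
        ⟨a, Multiset.mem_toFinset.mpr ha⟩
      rw [Multiset.mem_toFinset] at hxmem
      refine ⟨x, ⟨p.parts_pos hxmem, le_inf (hp x hxmem)
        (by rw [← p.parts_sum]; exact mem_le_sum hxmem)⟩, hxmem, ?_⟩
      intro i hi
      exact hxmax i (Multiset.mem_toFinset.mpr hi)
    · rintro ⟨x, ⟨_, hx2⟩, _, hall⟩
      intro i hi
      exact le_trans (hall i hi) (le_trans hx2 (min_le_left _ _))
  rw [Qc, hdecomp, Finset.card_biUnion]
  · apply Finset.sum_congr rfl
    intro x hx
    rw [Finset.mem_Icc] at hx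
    exact card_maxpart k x hx.1 (le_trans hx.2 (min_le_right _ _))
  · intro a ha b hb hab
    simp only [Finset.disjoint_left, Finset.mem_filter, Finset.mem_univ, true_and]
    rintro p ⟨ha1, ha2⟩ ⟨hb1, hb2⟩
    exact hab (le_antisymm (hb2 a ha1) (ha2 b hb1))

private def Pc (n m : ℕ) : ℕ := if m ≤ n then Qc (n - m) m else 0

private lemma Pc_one (n : ℕ) (hn : 1 ≤ n) : Pc n 1 = 1 := by
  rw [Pc, if_pos hn, Qc_one_right]

/-- If `T` satisfies the recurrence `T(n,n) = T(n,1) = 1` and, for `1 < m < n`,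
`T(n,m) = 1 + ∑_{x=1}^{min(m, n-m)} T(n-m, x)`, then for every `n > 1`,
`T(2n, n) = p(n) + p(n-1)`, where `p` is the partition function. -/
theorem stmt_7 (T : ℕ → ℕ → ℕ)
    (hTnn : ∀ n : ℕ, 1 ≤ n → T n n = 1)
    (hTn1 : ∀ n : ℕ, 1 ≤ n → T n 1 = 1)
    (hTrec : ∀ n m : ℕ, 1 < m → m < n →
      T n m = 1 + ∑ x ∈ Finset.Icc 1 (min m (n - m)), T (n - m) x)
    (n : ℕ) (hn : 1 < n) :
    T (2 * n) n = Fintype.card (Nat.Partition n) + Fintype.card (Nat.Partition (n - 1)) := by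
  have key : ∀ N, ∀ m, 2 ≤ m → m ≤ N → T N m = Pc N m + Pc (N - 1) m := by
    intro N
    induction N using Nat.strong_induction_on with
    | _ N ih =>
      intro m hm2 hmN
      rcases eq_or_lt_of_le hmN with rfl | hlt
      · -- m = N
        rw [hTnn m (by omega), Pc, Pc, if_pos (le_refl m), if_neg (by omega)]
        simp [Qc_eq_card (Nat.zero_le m)]
      · -- m < N
        set k := N - m with hk
        have hk1 : 1 ≤ k := by omega
        rw [hTrec N m (by omega) hlt]
        rcases eq_or_lt_of_le hk1 with hkeq | hk2
        · -- k = 1, N = m + 1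
          have hmin : min m (N - m) = 1 := by omega
          rw [hmin]
          simp only [Finset.Icc_self, Finset.sum_singleton]
          rw [hTn1 (N - m) (by omega)]
          have h1 : Pc N m = 1 := by
            rw [Pc, if_pos hmN, ← hk, ← hkeq]
            have := Qc_eq_card (k := 1) (m := m) (by omega)
            rw [this]; simp [Fintype.card_unique]
          have h2 : Pc (N - 1) m = 1 := by
            rw [Pc, if_pos (by omega)]
            have : N - 1 - m = 0 := by omega
            rw [this]
            have := Qc_eq_card (k := 0) (m := m) (Nat.zero_le m)
            rw [this]; simp [Fintype.card_unique]
          rw [h1, h2]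
        · -- k ≥ 2
          have hmink : 1 ≤ min m k := by omega
          have hsplit : Finset.Icc 1 (min m k) = insert 1 (Finset.Icc 2 (min m k)) := by
            ext y; simp only [Finset.mem_Icc, Finset.mem_insert]; omega
          rw [hsplit, Finset.sum_insert (by simp)]
          rw [hTn1 k hk1]
          have hsum : ∀ x ∈ Finset.Icc 2 (min m k), T k x = Pc k x + Pc (k - 1) x := by
            intro x hx
            rw [Finset.mem_Icc] at hx
            exact ih k (by omega) x hx.1 (le_trans hx.2 (min_le_right _ _))
          rw [Finset.sum_congr rfl hsum, Finset.sum_add_distrib]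
          -- reassemble sums including x = 1
          have hins : ∀ f : ℕ → ℕ, f 1 + ∑ x ∈ Finset.Icc 2 (min m k), f x
              = ∑ x ∈ Finset.Icc 1 (min m k), f x := by
            intro f
            have : Finset.Icc 1 (min m k) = insert 1 (Finset.Icc 2 (min m k)) := by
              ext y; simp [Finset.mem_Icc, Finset.mem_insert]; omega
            rw [this, Finset.sum_insert (by simp)]
          have e1 : ∑ x ∈ Finset.Icc 1 (min m k), Pc k x = Pc N m := by
            rw [Pc, if_pos hmN, ← hk, Qc_rec k m hk1 (by omega)]
            apply Finset.sum_congr rfl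
            intro x hx
            rw [Finset.mem_Icc] at hx
            rw [Pc, if_pos (le_trans hx.2 (min_le_right _ _))]
          have e2 : ∑ x ∈ Finset.Icc 1 (min m k), Pc (k - 1) x = Pc (N - 1) m := by
            have hkN : N - 1 - m = k - 1 := by omega
            rw [Pc, if_pos (by omega), hkN, Qc_rec (k - 1) m (by omega) (by omega)]
            rcases le_or_gt (min m k) (k - 1) with hle | hgt
            · -- min m k ≤ k - 1, so min m (k-1) = min m k
              have : min m (k - 1) = min m k := by omega
              rw [this]
              apply Finset.sum_congr rfl
              intro x hx
              rw [Finset.mem_Icc] at hx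
              rw [Pc, if_pos (by omega)]
            · -- min m k = k > k - 1, extra term x = k is zero
              have hmk : min m k = k := by omega
              have hmk1 : min m (k - 1) = k - 1 := by omega
              rw [hmk1]
              have hsplit2 : Finset.Icc 1 (min m k) = insert k (Finset.Icc 1 (k - 1)) := by
                rw [hmk]; ext y; simp [Finset.mem_Icc, Finset.mem_insert]; omega
              rw [hsplit2, Finset.sum_insert (by simp [Finset.mem_Icc]; omega)]
              have : Pc (k - 1) k = 0 := by rw [Pc, if_neg (by omega)]
              rw [this, zero_add]
              apply Finset.sum_congr rfl
              intro x hx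
              rw [Finset.mem_Icc] at hx
              rw [Pc, if_pos (by omega)]
          calc 1 + (1 + (∑ x ∈ Finset.Icc 2 (min m k), Pc k x
                  + ∑ x ∈ Finset.Icc 2 (min m k), Pc (k - 1) x))
              = (Pc k 1 + ∑ x ∈ Finset.Icc 2 (min m k), Pc k x)
                + (Pc (k - 1) 1 + ∑ x ∈ Finset.Icc 2 (min m k), Pc (k - 1) x) := by
                rw [Pc_one k hk1, Pc_one (k - 1) (by omega)]; ring
            _ = ∑ x ∈ Finset.Icc 1 (min m k), Pc k x
                + ∑ x ∈ Finset.Icc 1 (min m k), Pc (k - 1) x := by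
                rw [hins (Pc k), hins (Pc (k - 1))]
            _ = Pc N m + Pc (N - 1) m := by rw [e1, e2]
  have h1 : T (2 * n) n = Pc (2 * n) n + Pc (2 * n - 1) n := key (2 * n) n (by omega) (by omega)
  rw [h1]
  have h2 : Pc (2 * n) n = Fintype.card (Nat.Partition n) := by
    rw [Pc, if_pos (by omega)]
    have : 2 * n - n = n := by omega
    rw [this, Qc_eq_card (le_refl n)]
  have h3 : Pc (2 * n - 1) n = Fintype.card (Nat.Partition (n - 1)) := by
    rw [Pc, if_pos (by omega)]
    have : 2 * n - 1 - n = n - 1 := by omega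
    rw [this, Qc_eq_card (by omega)]
  rw [h2, h3]
end

section
/- For all integers n > 3, ∑_{x=⌊n/3⌋+1}^{⌊n/2⌋} nac(n−x, x) = 1 + ∑_{x=⌊n/3⌋+1}^{⌊(n−2)/2⌋} nac(n−2−x, x). -/
lemma sac_singleton (k m : ℕ) (h1 : 1 ≤ m) (h2 : m ≤ k) (h3 : k < 2*m) :
    sac k m = {[k]} := by
  ext a
  simp only [Set.mem_singleton_iff]
  constructor
  · rintro ⟨⟨hne, hpos, hsort, hsum⟩, hhead⟩
    match a with
    | [] => exact absurd rfl hne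
    | [h] =>
      simp only [List.sum_cons, List.sum_nil, add_zero] at hsum
      simp [hsum]
    | h :: b :: t =>
      rw [List.pairwise_cons] at hsort
      have hb : h ≤ b := hsort.1 b (by simp)
      simp only [List.head!_cons] at hhead
      simp only [List.sum_cons] at hsum
      omega
  · rintro rfl
    exact ⟨⟨by simp, by intro x hx; simp at hx; omega, by simp, by simp⟩,
      by simp [h2]⟩

lemma nac_eq_one (k m : ℕ) (h1 : 1 ≤ m) (h2 : m ≤ k) (h3 : k < 2*m) :
    nac k m = 1 := by
  rw [nac, sac_singleton k m h1 h2 h3]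
  exact Set.ncard_singleton _

theorem stmt_11 (n : ℕ) (hn : 3 < n) :
    ∑ x ∈ Finset.Icc (n / 3 + 1) (n / 2), nac (n - x) x =
      1 + ∑ x ∈ Finset.Icc (n / 3 + 1) ((n - 2) / 2), nac (n - 2 - x) x := by
  have hL : ∀ x ∈ Finset.Icc (n/3+1) (n/2), nac (n-x) x = 1 := by
    intro x hx
    rw [Finset.mem_Icc] at hx
    exact nac_eq_one _ _ (by omega) (by omega) (by omega)
  have hR : ∀ x ∈ Finset.Icc (n/3+1) ((n-2)/2), nac (n-2-x) x = 1 := by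
    intro x hx
    rw [Finset.mem_Icc] at hx
    exact nac_eq_one _ _ (by omega) (by omega) (by omega)
  rw [Finset.sum_congr rfl hL, Finset.sum_congr rfl hR, Finset.sum_const,
    Finset.sum_const, smul_eq_mul, smul_eq_mul, mul_one, mul_one,
    Nat.card_Icc, Nat.card_Icc]
  omega
end

section
/- For every integer n ≥ 3 and every integer m with 1 ≤ m ≤ ⌊n/2⌋, the number of terminal ascending compositions of n with first part at least m satisfies ntac(n,m) = nac(n,m) − nac(n−2,m). -/
/-! ### descending world -/

def DTerm : List ℕ → Prop
  | x :: y :: _ => 2 * y ≤ x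
  | _ => True

def DS (n m : ℕ) : Set (List ℕ) :=
  {d | d ≠ [] ∧ d.Pairwise (· ≥ ·) ∧ d.sum = n ∧ ∀ x ∈ d, m ≤ x}

lemma mem_sac_iff (n m : ℕ) (hm : 1 ≤ m) (a : List ℕ) :
    a ∈ sac n m ↔ a.reverse ∈ DS n m := by
  unfold sac DS IsAscComp
  simp only [Set.mem_setOf_eq, List.sum_reverse, List.mem_reverse, ne_eq,
    List.reverse_eq_nil_iff]
  rw [show (List.Pairwise (· ≥ ·) a.reverse ↔ List.Pairwise (· ≤ ·) a) from List.pairwise_reverse]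
  match a with
  | [] => simp
  | h :: t =>
    simp only [List.head!_cons, List.pairwise_cons, List.mem_cons, List.cons_ne_nil,
      not_false_eq_true, true_and]
    constructor
    · rintro ⟨⟨hpos, ⟨hht, hts⟩, hsum⟩, hmh⟩
      refine ⟨⟨hht, hts⟩, hsum, ?_⟩
      rintro x (rfl | hx)
      · exact hmh
      · exact le_trans hmh (hht x hx)
    · rintro ⟨⟨hht, hts⟩, hsum, hall⟩
      refine ⟨⟨?_, ⟨hht, hts⟩, hsum⟩, hall h (Or.inl rfl)⟩
      intro x hx
      exact lt_of_lt_of_le hm (hall x hx)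

lemma isTerminal_iff (d : List ℕ) (hd : d ≠ []) :
    IsTerminal d.reverse ↔ DTerm d := by
  match d with
  | [x] => simp [IsTerminal, DTerm]
  | x :: y :: rest =>
    have hrev : (x :: y :: rest).reverse = rest.reverse ++ [y, x] := by simp
    rw [hrev]
    have hlen : (rest.reverse ++ [y, x]).length = rest.length + 2 := by simp
    have h1 : (rest.reverse ++ [y, x])[rest.length + 2 - 2]! = y := by
      rw [show rest.length + 2 - 2 = rest.reverse.length from by simp,
        getElem!_pos _ _ (by simp), List.getElem_append_right (Nat.le_refl _)]
      simp
    have h2 : (rest.reverse ++ [y, x])[rest.length + 2 - 1]! = x := by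
      rw [show rest.length + 2 - 1 = rest.reverse.length + 1 from by simp,
        getElem!_pos _ _ (by simp), List.getElem_append_right (by simp)]
      simp
    unfold IsTerminal
    rw [hlen, h1, h2]
    show _ ↔ 2 * y ≤ x
    constructor
    · rintro (h | ⟨-, h⟩)
      · omega
      · exact h
    · intro h; exact Or.inr ⟨by omega, h⟩

lemma DS_finite (n m : ℕ) (hm : 1 ≤ m) : (DS n m).Finite := by
  rw [← Set.finite_coe_iff]
  let f : DS n m → n.Partition := fun d =>
    ⟨(↑(d : List ℕ) : Multiset ℕ),
      fun {i} hi => lt_of_lt_of_le hm (d.2.2.2.2 i (by exact_mod_cast hi)),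
      by simpa using d.2.2.2.1⟩
  have hf : Function.Injective f := by
    rintro ⟨d1, h1⟩ ⟨d2, h2⟩ h
    have : (↑d1 : Multiset ℕ) = ↑d2 := congrArg Nat.Partition.parts h
    rw [Multiset.coe_eq_coe] at this
    exact Subtype.ext (List.Perm.eq_of_pairwise' h1.2.1 h2.2.1 this)
  exact Finite.of_injective f hf

def phi : List ℕ → List ℕ
  | x :: y :: rest =>
      if y + 2 ≤ x then (x - 2) :: y :: rest
      else if x = 1 then rest
      else (x + y - 2) :: rest
  | l => l

def psi : List ℕ → List ℕ
  | [] => []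
  | [u] => if u = 1 then [1, 1, 1] else [(u + 3) / 2, (u + 2) / 2]
  | u :: v :: rest =>
      if u = 1 then 1 :: 1 :: u :: v :: rest
      else if 2 * v ≤ u + 2 then (u + 3) / 2 :: (u + 2) / 2 :: v :: rest
      else (u + 2) :: v :: rest

lemma phi_mapsTo (n m : ℕ) (hn : 3 ≤ n) (hm : 1 ≤ m) : Set.MapsTo phi {d ∈ DS n m | ¬ DTerm d} (DS (n - 2) m) := by
  rintro d ⟨⟨hne, hsort, hsum, hall⟩, hNT⟩
  rcases d with _ | ⟨x, _ | ⟨y, rest⟩⟩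
  · exact absurd trivial hNT
  · exact absurd trivial hNT
  replace hNT : ¬ (2 * y ≤ x) := hNT
  rw [List.pairwise_cons] at hsort
  obtain ⟨hx, hsort⟩ := hsort
  rw [List.pairwise_cons] at hsort
  obtain ⟨hy, hsort⟩ := hsort
  have hxy : y ≤ x := hx y List.mem_cons_self
  have hmx : m ≤ x := hall x (by simp)
  have hmy : m ≤ y := hall y (by simp)
  simp only [List.sum_cons] at hsum
  show phi (x :: y :: rest) ∈ _
  simp only [phi]
  split_ifs with h1 h2
  · refine ⟨by simp, ?_, ?_, ?_⟩
    · rw [List.pairwise_cons]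
      refine ⟨?_, List.pairwise_cons.mpr ⟨hy, hsort⟩⟩
      rintro b hb
      rcases List.mem_cons.mp hb with rfl | hb
      · omega
      · have := hy b hb; omega
    · simp only [List.sum_cons]; omega
    · rintro z hz
      rcases List.mem_cons.mp hz with rfl | hz
      · omega
      · exact hall z (by simp [List.mem_cons.mp hz])
  · subst h2
    have hy1 : y = 1 := by omega
    subst hy1
    have hrest : rest ≠ [] := by
      rintro rfl
      simp at hsum; omega
    refine ⟨hrest, hsort, by omega, fun z hz => hall z (by simp [hz])⟩
  · refine ⟨by simp, ?_, ?_, ?_⟩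
    · rw [List.pairwise_cons]
      exact ⟨fun b hb => by have := hy b hb; omega, hsort⟩
    · simp only [List.sum_cons]; omega
    · rintro z hz
      rcases List.mem_cons.mp hz with rfl | hz
      · omega
      · exact hall z (by simp [hz])

lemma psi_mapsTo (n m : ℕ) (hn : 3 ≤ n) (hm : 1 ≤ m) (hmn : m ≤ n / 2) : Set.MapsTo psi (DS (n - 2) m) {d ∈ DS n m | ¬ DTerm d} := by
  rintro e ⟨hne, hsort, hsum, hall⟩
  rcases e with _ | ⟨u, _ | ⟨v, rest⟩⟩
  · exact absurd rfl hne
  · -- [u]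
    simp only [List.sum_cons, List.sum_nil] at hsum
    have hmu : m ≤ u := hall u (by simp)
    have hu1 : 1 ≤ u := le_trans hm hmu
    show psi [u] ∈ _
    simp only [psi]
    split_ifs with h
    · subst h
      have hn3 : n = 3 := by omega
      have hm1 : m = 1 := by omega
      subst hn3; subst hm1
      refine ⟨⟨by simp, by simp, by simp, by simp⟩, ?_⟩
      show ¬ (2 * 1 ≤ 1); omega
    · refine ⟨⟨by simp, ?_, ?_, ?_⟩, ?_⟩
      · rw [List.pairwise_cons]
        constructor
        · rintro b hb; simp at hb; omega
        · simp
      · simp only [List.sum_cons, List.sum_nil]; omega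
      · rintro z hz
        simp at hz
        have : m ≤ n / 2 := hmn
        rcases hz with rfl | rfl <;> omega
      · show ¬ (2 * ((u + 2) / 2) ≤ (u + 3) / 2); omega
  · -- u :: v :: rest
    rw [List.pairwise_cons] at hsort
    obtain ⟨hu, hsort⟩ := hsort
    rw [List.pairwise_cons] at hsort
    obtain ⟨hv, hsort⟩ := hsort
    have huv : v ≤ u := hu v List.mem_cons_self
    have hmu : m ≤ u := hall u (by simp)
    have hmv : m ≤ v := hall v (by simp)
    simp only [List.sum_cons] at hsum
    show psi (u :: v :: rest) ∈ _
    simp only [psi]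
    split_ifs with h1 h2
    · subst h1
      refine ⟨⟨by simp, ?_, ?_, ?_⟩, ?_⟩
      · rw [List.pairwise_cons]
        refine ⟨?_, ?_⟩
        · rintro b hb
          rcases List.mem_cons.mp hb with rfl | hb
          · omega
          · rcases List.mem_cons.mp hb with rfl | hb
            · omega
            · rcases List.mem_cons.mp hb with rfl | hb
              · omega
              · have := hv b hb; omega
        · rw [List.pairwise_cons]
          refine ⟨?_, List.pairwise_cons.mpr ⟨hu, List.pairwise_cons.mpr ⟨hv, hsort⟩⟩⟩
          rintro b hb
          rcases List.mem_cons.mp hb with rfl | hb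
          · omega
          · rcases List.mem_cons.mp hb with rfl | hb
            · omega
            · have := hv b hb; omega
      · simp only [List.sum_cons]; omega
      · rintro z hz
        rcases List.mem_cons.mp hz with rfl | hz
        · omega
        · rcases List.mem_cons.mp hz with rfl | hz
          · omega
          · exact hall z hz
      · show ¬ (2 * 1 ≤ 1); omega
    · refine ⟨⟨by simp, ?_, ?_, ?_⟩, ?_⟩
      · rw [List.pairwise_cons]
        refine ⟨?_, ?_⟩
        · rintro b hb
          rcases List.mem_cons.mp hb with rfl | hb
          · omega
          · rcases List.mem_cons.mp hb with rfl | hb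
            · omega
            · have := hv b hb; omega
        · rw [List.pairwise_cons]
          refine ⟨?_, List.pairwise_cons.mpr ⟨hv, hsort⟩⟩
          rintro b hb
          rcases List.mem_cons.mp hb with rfl | hb
          · omega
          · have := hv b hb; omega
      · simp only [List.sum_cons]; omega
      · rintro z hz
        rcases List.mem_cons.mp hz with rfl | hz
        · omega
        · rcases List.mem_cons.mp hz with rfl | hz
          · omega
          · rcases List.mem_cons.mp hz with rfl | hz
            · omega
            · exact hall z (by simp [hz])
      · show ¬ (2 * ((u + 2) / 2) ≤ (u + 3) / 2); omega
    · refine ⟨⟨by simp, ?_, ?_, ?_⟩, ?_⟩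
      · rw [List.pairwise_cons]
        refine ⟨?_, List.pairwise_cons.mpr ⟨hv, hsort⟩⟩
        rintro b hb
        rcases List.mem_cons.mp hb with rfl | hb
        · omega
        · have := hv b hb; omega
      · simp only [List.sum_cons]; omega
      · rintro z hz
        rcases List.mem_cons.mp hz with rfl | hz
        · omega
        · rcases List.mem_cons.mp hz with rfl | hz
          · omega
          · exact hall z (by simp [hz])
      · show ¬ (2 * v ≤ u + 2); omega

lemma phi_leftInv (n m : ℕ) (hn : 3 ≤ n) (hm : 1 ≤ m) : Set.LeftInvOn psi phi {d ∈ DS n m | ¬ DTerm d} := by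
  rintro d ⟨⟨hne, hsort, hsum, hall⟩, hNT⟩
  rcases d with _ | ⟨x, _ | ⟨y, rest⟩⟩
  · exact absurd trivial hNT
  · exact absurd trivial hNT
  replace hNT : ¬ (2 * y ≤ x) := hNT
  rw [List.pairwise_cons] at hsort
  obtain ⟨hx, hsort⟩ := hsort
  rw [List.pairwise_cons] at hsort
  obtain ⟨hy, hsort⟩ := hsort
  have hxy : y ≤ x := hx y List.mem_cons_self
  have hmx : m ≤ x := hall x (by simp)
  have hmy : m ≤ y := hall y (by simp)
  simp only [List.sum_cons] at hsum
  show psi (phi (x :: y :: rest)) = _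
  simp only [phi]
  split_ifs with h1 h2
  · -- (x-2) :: y :: rest
    show psi ((x - 2) :: y :: rest) = _
    simp only [psi]
    rw [if_neg (by omega), if_neg (by omega)]
    simp only [List.cons.injEq, and_true]
    omega
  · -- rest, with x = 1, y = 1
    subst h2
    have hy1 : y = 1 := by omega
    subst hy1
    have hrest : rest ≠ [] := by
      rintro rfl; simp at hsum; omega
    obtain ⟨r, t, rfl⟩ := List.exists_cons_of_ne_nil hrest
    have hr1 : r = 1 := by
      have h1 := hy r (by simp)
      have h2 := hall r (by simp)
      omega
    subst hr1
    rcases t with _ | ⟨r2, t⟩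
    · show psi [1] = _
      simp only [psi]
      simp
    · have hr2 : r2 = 1 := by
        have h1 := hy r2 (by simp)
        have h2 := hall r2 (by simp)
        omega
      subst hr2
      show psi (1 :: 1 :: t) = _
      simp only [psi]
      simp
  · -- (x + y - 2) :: rest
    rcases rest with _ | ⟨v, rest'⟩
    · show psi [x + y - 2] = _
      simp only [psi]
      rw [if_neg (by omega)]
      simp only [List.cons.injEq, and_true]
      omega
    · have hv : v ≤ y := hy v (by simp)
      show psi ((x + y - 2) :: v :: rest') = _
      simp only [psi]
      rw [if_neg (by omega), if_pos (by omega)]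
      simp only [List.cons.injEq, and_true]
      omega

lemma psi_rightInv (n m : ℕ) (hm : 1 ≤ m) : Set.RightInvOn psi phi (DS (n - 2) m) := by
  rintro e ⟨hne, hsort, hsum, hall⟩
  rcases e with _ | ⟨u, _ | ⟨v, rest⟩⟩
  · exact absurd rfl hne
  · simp only [List.sum_cons, List.sum_nil] at hsum
    have hmu : m ≤ u := hall u (by simp)
    show phi (psi [u]) = _
    simp only [psi]
    split_ifs with h
    · subst h
      show phi [1, 1, 1] = _
      simp only [phi]
      simp
    · show phi [(u + 3) / 2, (u + 2) / 2] = _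
      simp only [phi]
      rw [if_neg (by omega), if_neg (by omega)]
      simp only [List.cons.injEq, and_true]
      omega
  · rw [List.pairwise_cons] at hsort
    obtain ⟨hu, hsort⟩ := hsort
    have huv : v ≤ u := hu v List.mem_cons_self
    have hmu : m ≤ u := hall u (by simp)
    have hmv : m ≤ v := hall v (by simp)
    show phi (psi (u :: v :: rest)) = _
    simp only [psi]
    split_ifs with h1 h2
    · subst h1
      show phi (1 :: 1 :: 1 :: v :: rest) = _
      simp only [phi]
      simp
    · show phi ((u + 3) / 2 :: (u + 2) / 2 :: v :: rest) = _
      simp only [phi]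
      rw [if_neg (by omega), if_neg (by omega)]
      simp only [List.cons.injEq, and_true]
      omega
    · show phi ((u + 2) :: v :: rest) = _
      simp only [phi]
      rw [if_pos (by omega)]
      simp only [List.cons.injEq, and_true]
      omega

lemma phi_bijOn (n m : ℕ) (hn : 3 ≤ n) (hm : 1 ≤ m) (hmn : m ≤ n / 2) : Set.BijOn phi {d ∈ DS n m | ¬ DTerm d} (DS (n - 2) m) :=
  Set.InvOn.bijOn ⟨phi_leftInv n m hn hm, psi_rightInv n m hm⟩ (phi_mapsTo n m hn hm) (psi_mapsTo n m hn hm hmn)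

theorem stmt_12 (n m : ℕ) (hn : 3 ≤ n) (hm : 1 ≤ m) (hmn : m ≤ n / 2) :
    (ntac n m : ℤ) = (nac n m : ℤ) - (nac (n - 2) m : ℤ) := by
  have himg : DS n m = List.reverse '' sac n m := by
    ext d
    constructor
    · intro hd
      exact ⟨d.reverse, (mem_sac_iff n m hm d.reverse).mpr (by simpa using hd), by simp⟩
    · rintro ⟨a, ha, rfl⟩
      exact (mem_sac_iff n m hm a).mp ha
  have himg2 : DS (n - 2) m = List.reverse '' sac (n - 2) m := by
    ext d
    constructor
    · intro hd
      exact ⟨d.reverse, (mem_sac_iff (n - 2) m hm d.reverse).mpr (by simpa using hd), by simp⟩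
    · rintro ⟨a, ha, rfl⟩
      exact (mem_sac_iff (n - 2) m hm a).mp ha
  have hTimg : {d ∈ DS n m | DTerm d} =
      List.reverse '' {a : List ℕ | IsAscComp n a ∧ m ≤ a.head! ∧ IsTerminal a} := by
    ext d
    constructor
    · rintro ⟨hd, hterm⟩
      have hmem := (mem_sac_iff n m hm d.reverse).mpr (by simpa using hd)
      refine ⟨d.reverse, ⟨hmem.1, hmem.2, ?_⟩, by simp⟩
      rw [isTerminal_iff d hd.1] ; exact hterm
    · rintro ⟨a, ⟨h1, h2, h3⟩, rfl⟩
      have hmem := (mem_sac_iff n m hm a).mp ⟨h1, h2⟩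
      refine ⟨hmem, ?_⟩
      rw [← isTerminal_iff a.reverse hmem.1]
      simpa using h3
  have hrevinj : Function.Injective (List.reverse : List ℕ → List ℕ) :=
    fun a b h => by simpa using congrArg List.reverse h
  have hnac : nac n m = (DS n m).ncard := by
    rw [himg, Set.ncard_image_of_injective _ hrevinj]; rfl
  have hnac2 : nac (n - 2) m = (DS (n - 2) m).ncard := by
    rw [himg2, Set.ncard_image_of_injective _ hrevinj]; rfl
  have hntac : ntac n m = {d ∈ DS n m | DTerm d}.ncard := by
    rw [hTimg, Set.ncard_image_of_injective _ hrevinj]; rfl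
  have hfin : (DS n m).Finite := DS_finite n m hm
  have hsplit : (DS n m).ncard =
      {d ∈ DS n m | DTerm d}.ncard + {d ∈ DS n m | ¬ DTerm d}.ncard := by
    rw [← Set.ncard_union_eq ?_ ?_ ?_]
    · congr 1
      ext d; by_cases h : DTerm d <;> simp [h]
    · exact Set.disjoint_left.mpr (fun d hd hd' => hd'.2 hd.2)
    · exact hfin.subset (fun d hd => hd.1)
    · exact hfin.subset (fun d hd => hd.1)
  have hbij := phi_bijOn n m hn hm hmn
  have hcard : {d ∈ DS n m | ¬ DTerm d}.ncard = (DS (n - 2) m).ncard := by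
    rw [← hbij.image_eq, Set.ncard_image_of_injOn hbij.injOn]
  have : nac n m = ntac n m + nac (n - 2) m := by
    rw [hnac, hnac2, hntac, hsplit, hcard]
  rw [this]
  push_cast
  ring
end

section
/- For every positive integer n, the number of terminal ascending compositions of n equals p(n) − p(n−2), i.e. ntac(n,1) = p(n) − p(n−2). -/
/-- The partition function extended to `ℤ`: `p(z) = 0` for `z < 0`. -/
noncomputable def pZ (z : ℤ) : ℕ :=
  if 0 ≤ z then Fintype.card (Nat.Partition z.toNat) else 0

/- ### list helpers -/

lemma getLast!_concat' (d : List ℕ) (x : ℕ) : (d ++ [x]).getLast! = x := by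
  induction d with
  | nil => rfl
  | cons h t ih => simpa [List.getLast!] using ih

lemma exists_decomp₂ (a : List ℕ) (h : 2 ≤ a.length) : ∃ d x y, a = d ++ [x, y] := by
  rcases hr : a.reverse with _ | ⟨y, _ | ⟨x, d'⟩⟩
  · rw [List.reverse_eq_nil_iff] at hr; subst hr; simp at h
  · have := congrArg List.length hr; simp at this; omega
  · exact ⟨d'.reverse, x, y, by rw [← List.reverse_reverse a, hr]; simp⟩

lemma exists_decomp₁ (a : List ℕ) (h : a ≠ []) : ∃ e L, a = e ++ [L] := by
  rcases hr : a.reverse with _ | ⟨L, e⟩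
  · simp_all
  · exact ⟨e.reverse, L, by rw [← List.reverse_reverse a, hr]; simp⟩

lemma sorted_concat₁ (e : List ℕ) (L : ℕ) :
    (e ++ [L]).Pairwise (· ≤ ·) ↔ e.Pairwise (· ≤ ·) ∧ ∀ z ∈ e, z ≤ L := by
  rw [List.pairwise_append]
  simp

lemma sorted_concat₂ (d : List ℕ) (x y : ℕ) :
    (d ++ [x, y]).Pairwise (· ≤ ·) ↔
      d.Pairwise (· ≤ ·) ∧ (∀ z ∈ d, z ≤ x) ∧ x ≤ y := by
  rw [List.pairwise_append]
  constructor
  · rintro ⟨h1, h2, h3⟩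
    simp only [List.pairwise_cons] at h2
    exact ⟨h1, fun z hz => (h3 z hz x (by simp)), by simpa using h2⟩
  · rintro ⟨h1, h2, h3⟩
    refine ⟨h1, by simpa using h3, ?_⟩
    intro z hz w hw
    simp only [List.mem_cons, List.mem_singleton] at hw
    rcases hw with rfl | hw
    · exact h2 z hz
    · simp at hw; subst hw; exact (h2 z hz).trans h3

lemma terminal_concat₂ (d : List ℕ) (x y : ℕ) :
    IsTerminal (d ++ [x, y]) ↔ 2 * x ≤ y := by
  have hlen : (d ++ [x, y]).length = d.length + 2 := by simp
  have hx : (d ++ [x, y])[(d ++ [x, y]).length - 2]! = x := by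
    rw [hlen]
    have h1 : d.length + 2 - 2 = d.length := by omega
    rw [h1, getElem!_pos _ _ (by simp)]
    rw [List.getElem_append_right (le_refl _)]
    simp
  have hy : (d ++ [x, y])[(d ++ [x, y]).length - 1]! = y := by
    rw [hlen]
    have h1 : d.length + 2 - 1 = d.length + 1 := by omega
    rw [h1, getElem!_pos _ _ (by simp)]
    rw [List.getElem_append_right (by omega)]
    simp
  unfold IsTerminal
  rw [hx, hy, hlen]
  constructor
  · rintro (h | ⟨-, h⟩); · omega
    · exact h
  · intro h; right; exact ⟨by omega, h⟩

lemma sum_concat₂ (d : List ℕ) (x y : ℕ) : (d ++ [x, y]).sum = d.sum + x + y := by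
  simp; ring

/- ### sets -/

def PL (m : ℕ) : Set (List ℕ) :=
  {a | (∀ x ∈ a, 0 < x) ∧ a.Pairwise (· ≤ ·) ∧ a.sum = m}

def NSet (n : ℕ) : Set (List ℕ) :=
  {a | IsAscComp n a ∧ ¬ IsTerminal a}

lemma mem_N_iff (n : ℕ) (a : List ℕ) :
    a ∈ NSet n ↔ ∃ d x y, a = d ++ [x, y] ∧ d.Pairwise (· ≤ ·) ∧ (∀ z ∈ d, 0 < z) ∧
      (∀ z ∈ d, z ≤ x) ∧ 0 < x ∧ x ≤ y ∧ y < 2 * x ∧ d.sum + x + y = n := by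
  constructor
  · rintro ⟨⟨hne, hpos, hsort, hsum⟩, hnt⟩
    have hlen : 2 ≤ a.length := by
      rcases a with _ | ⟨u, _ | ⟨v, t⟩⟩
      · simp at hne
      · exfalso; exact hnt (Or.inl rfl)
      · simp
    obtain ⟨d, x, y, rfl⟩ := exists_decomp₂ a hlen
    rw [sorted_concat₂] at hsort
    rw [terminal_concat₂] at hnt
    refine ⟨d, x, y, rfl, hsort.1, ?_, hsort.2.1, ?_, hsort.2.2, by omega, ?_⟩
    · exact fun z hz => hpos z (by simp [hz])
    · exact hpos x (by simp)
    · rw [sum_concat₂] at hsum; exact hsum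
  · rintro ⟨d, x, y, rfl, hsort, hdpos, hdx, hx, hxy, hy2, hsum⟩
    refine ⟨⟨by simp, ?_, ?_, ?_⟩, ?_⟩
    · intro z hz
      simp only [List.mem_append, List.mem_cons, List.mem_singleton] at hz
      rcases hz with hz | hz | hz
      · exact hdpos z hz
      · subst hz; exact hx
      · simp at hz; subst hz; omega
    · rw [sorted_concat₂]; exact ⟨hsort, hdx, hxy⟩
    · rw [sum_concat₂]; exact hsum
    · rw [terminal_concat₂]; omega

lemma mem_P_cons (m : ℕ) (e : List ℕ) (L : ℕ) :
    e ++ [L] ∈ PL m ↔ (∀ z ∈ e, 0 < z) ∧ 0 < L ∧ e.Pairwise (· ≤ ·) ∧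
      (∀ z ∈ e, z ≤ L) ∧ e.sum + L = m := by
  unfold PL
  simp only [Set.mem_setOf_eq, sorted_concat₁, List.sum_append, List.sum_cons,
    List.sum_nil, add_zero]
  constructor
  · rintro ⟨h1, ⟨h2, h3⟩, h4⟩
    exact ⟨fun z hz => h1 z (by simp [hz]), h1 L (by simp), h2, h3, h4⟩
  · rintro ⟨h1, h2, h3, h4, h5⟩
    refine ⟨?_, ⟨h3, h4⟩, h5⟩
    intro z hz
    simp only [List.mem_append, List.mem_singleton] at hz
    rcases hz with hz | hz
    · exact h1 z hz
    · subst hz; exact h2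

/- ### the maps -/

def fmap (a : List ℕ) : List ℕ :=
  let x := a.dropLast.getLast!
  let y := a.getLast!
  if x ≤ 1 then a.dropLast.dropLast
  else if x + 2 ≤ y then a.dropLast ++ [y - 2]
  else a.dropLast.dropLast ++ [x + y - 2]

def gmap (b : List ℕ) : List ℕ :=
  let L := b.getLast!
  if L ≤ 1 then b ++ [1, 1]
  else if L / 2 + 2 ≤ b.dropLast.getLast! then b.dropLast ++ [L + 2]
  else b.dropLast ++ [L / 2 + 1, L + 1 - L / 2]

lemma fmap_eq (d : List ℕ) (x y : ℕ) :
    fmap (d ++ [x, y]) = if x ≤ 1 then d else if x + 2 ≤ y then (d ++ [x]) ++ [y - 2]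
      else d ++ [x + y - 2] := by
  have h1 : (d ++ [x, y]).dropLast = d ++ [x] := by simp
  have h2 : (d ++ [x, y]).getLast! = y := by
    have : d ++ [x, y] = (d ++ [x]) ++ [y] := by simp
    rw [this, getLast!_concat']
  unfold fmap
  rw [h1, h2, getLast!_concat']
  simp only []
  split
  · simp
  · rw [show (d ++ [x]).dropLast = d by simp]

lemma gmap_eq (e : List ℕ) (L : ℕ) :
    gmap (e ++ [L]) = if L ≤ 1 then (e ++ [L]) ++ [1, 1]
      else if L / 2 + 2 ≤ e.getLast! then e ++ [L + 2]
      else e ++ [L / 2 + 1, L + 1 - L / 2] := by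
  have h1 : (e ++ [L]).dropLast = e := by simp
  unfold gmap
  rw [h1, getLast!_concat']

lemma gmap_nil : gmap [] = [1, 1] := rfl

lemma getLast!_nil : ([] : List ℕ).getLast! = 0 := rfl

lemma getLast!_le_of_forall (d : List ℕ) (x : ℕ) (h : ∀ z ∈ d, z ≤ x) :
    d.getLast! ≤ x := by
  rcases eq_or_ne d [] with rfl | hne
  · simp [getLast!_nil]
  · obtain ⟨e, L, rfl⟩ := exists_decomp₁ d hne
    rw [getLast!_concat']
    exact h L (by simp)

lemma le_getLast!_of_sorted (e : List ℕ) (h : e.Pairwise (· ≤ ·)) :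
    ∀ z ∈ e, z ≤ e.getLast! := by
  rcases eq_or_ne e [] with rfl | hne
  · simp
  · obtain ⟨e', L, rfl⟩ := exists_decomp₁ e hne
    rw [getLast!_concat']
    rw [sorted_concat₁] at h
    intro z hz
    simp only [List.mem_append, List.mem_singleton] at hz
    rcases hz with hz | hz
    · exact h.2 z hz
    · omega

lemma mapsTo_g (m : ℕ) : Set.MapsTo gmap (PL m) (NSet (m + 2)) := by
  intro b hb
  rcases eq_or_ne b [] with rfl | hne
  · have hm : m = 0 := by
      obtain ⟨-, -, hsum⟩ := hb
      simpa using hsum.symm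
    subst hm
    rw [gmap_nil, mem_N_iff]
    exact ⟨[], 1, 1, rfl, by simp, by simp, by simp, by omega, by omega, by omega, by simp⟩
  · obtain ⟨e, L, rfl⟩ := exists_decomp₁ b hne
    rw [mem_P_cons] at hb
    obtain ⟨hepos, hL, hesort, hezL, hsum⟩ := hb
    rw [gmap_eq]
    by_cases hL1 : L ≤ 1
    · rw [if_pos hL1]
      have hLeq : L = 1 := by omega
      rw [mem_N_iff]
      refine ⟨e ++ [L], 1, 1, by simp, ?_, ?_, ?_, by omega, by omega, by omega, ?_⟩
      · rw [sorted_concat₁]; exact ⟨hesort, hezL⟩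
      · intro z hz
        simp only [List.mem_append, List.mem_singleton] at hz
        rcases hz with hz | hz
        · exact hepos z hz
        · omega
      · intro z hz
        simp only [List.mem_append, List.mem_singleton] at hz
        rcases hz with hz | hz
        · have := hezL z hz; omega
        · omega
      · rw [List.sum_append]; simp; omega
    · rw [if_neg hL1]
      by_cases hA : L / 2 + 2 ≤ e.getLast!
      · rw [if_pos hA]
        have hene : e ≠ [] := by
          rintro rfl
          rw [getLast!_nil] at hA; omega
        obtain ⟨e', p, rfl⟩ := exists_decomp₁ e hene
        rw [getLast!_concat'] at hA
        rw [sorted_concat₁] at hesort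
        have hpL : p ≤ L := hezL p (by simp)
        rw [mem_N_iff]
        refine ⟨e', p, L + 2, by simp, hesort.1, ?_, hesort.2, ?_, by omega, by omega, ?_⟩
        · exact fun z hz => hepos z (by simp [hz])
        · exact hepos p (by simp)
        · rw [List.sum_append] at hsum; simp at hsum; omega
      · rw [if_neg hA]
        rw [mem_N_iff]
        refine ⟨e, L / 2 + 1, L + 1 - L / 2, rfl, hesort, hepos, ?_, by omega, by omega,
          by omega, by omega⟩
        intro z hz
        have h1 := le_getLast!_of_sorted e hesort z hz
        omega

lemma mapsTo_f (m : ℕ) : Set.MapsTo fmap (NSet (m + 2)) (PL m) := by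
  intro a ha
  rw [mem_N_iff] at ha
  obtain ⟨d, x, y, rfl, hdsort, hdpos, hdx, hx, hxy, hy2, hsum⟩ := ha
  rw [fmap_eq]
  by_cases hx1 : x ≤ 1
  · rw [if_pos hx1]
    exact ⟨hdpos, hdsort, by omega⟩
  · rw [if_neg hx1]
    by_cases hxy2 : x + 2 ≤ y
    · rw [if_pos hxy2]
      rw [mem_P_cons]
      refine ⟨?_, by omega, ?_, ?_, ?_⟩
      · intro z hz
        simp only [List.mem_append, List.mem_singleton] at hz
        rcases hz with hz | hz
        · exact hdpos z hz
        · omega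
      · rw [sorted_concat₁]; exact ⟨hdsort, hdx⟩
      · intro z hz
        simp only [List.mem_append, List.mem_singleton] at hz
        rcases hz with hz | hz
        · have := hdx z hz; omega
        · omega
      · rw [List.sum_append]; simp; omega
    · rw [if_neg hxy2]
      rw [mem_P_cons]
      refine ⟨hdpos, by omega, hdsort, ?_, by omega⟩
      intro z hz
      have := hdx z hz; omega

lemma leftInv (m : ℕ) : ∀ b ∈ PL m, fmap (gmap b) = b := by
  intro b hb
  rcases eq_or_ne b [] with rfl | hne
  · rw [gmap_nil, show [1,1] = ([] : List ℕ) ++ [1,1] by simp, fmap_eq]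
    simp
  · obtain ⟨e, L, rfl⟩ := exists_decomp₁ b hne
    rw [mem_P_cons] at hb
    obtain ⟨hepos, hL, hesort, hezL, hsum⟩ := hb
    rw [gmap_eq]
    by_cases hL1 : L ≤ 1
    · rw [if_pos hL1]
      rw [fmap_eq (e ++ [L]) 1 1]
      simp
    · rw [if_neg hL1]
      by_cases hA : L / 2 + 2 ≤ e.getLast!
      · rw [if_pos hA]
        have hene : e ≠ [] := by
          rintro rfl
          rw [getLast!_nil] at hA; omega
        obtain ⟨e', p, rfl⟩ := exists_decomp₁ e hene
        rw [getLast!_concat'] at hA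
        have hpL : p ≤ L := hezL p (by simp)
        rw [show (e' ++ [p]) ++ [L + 2] = e' ++ [p, L + 2] by simp, fmap_eq]
        rw [if_neg (by omega), if_pos (by omega)]
        simp
      · rw [if_neg hA]
        rw [fmap_eq]
        rw [if_neg (by omega), if_neg (by omega)]
        congr 1
        simp; omega

lemma rightInv (m : ℕ) : ∀ a ∈ NSet (m + 2), gmap (fmap a) = a := by
  intro a ha
  rw [mem_N_iff] at ha
  obtain ⟨d, x, y, rfl, hdsort, hdpos, hdx, hx, hxy, hy2, hsum⟩ := ha
  rw [fmap_eq]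
  by_cases hx1 : x ≤ 1
  · rw [if_pos hx1]
    have hxe : x = 1 := by omega
    have hye : y = 1 := by omega
    subst hxe; subst hye
    rcases eq_or_ne d [] with rfl | hne
    · rw [gmap_nil]; simp
    · obtain ⟨d', q, rfl⟩ := exists_decomp₁ d hne
      have hq : q ≤ 1 := hdx q (by simp)
      rw [gmap_eq, if_pos hq]
  · rw [if_neg hx1]
    by_cases hxy2 : x + 2 ≤ y
    · rw [if_pos hxy2]
      rw [gmap_eq, if_neg (by omega)]
      rw [getLast!_concat']
      rw [if_pos (by omega)]
      rw [show y - 2 + 2 = y by omega]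
      simp
    · rw [if_neg hxy2]
      rw [gmap_eq, if_neg (by omega)]
      have hgl : d.getLast! ≤ x := getLast!_le_of_forall d x hdx
      rw [if_neg (by omega)]
      congr 2
      · omega
      · congr 1; omega

/- ### counting -/

lemma bijOn_g (m : ℕ) : Set.BijOn gmap (PL m) (NSet (m + 2)) :=
  Set.InvOn.bijOn ⟨leftInv m, rightInv m⟩ (mapsTo_g m) (mapsTo_f m)

noncomputable def pmap (m : ℕ) : Nat.Partition m → List ℕ := fun q => q.parts.sort (· ≤ ·)

lemma bijOn_p (m : ℕ) : Set.BijOn (pmap m) Set.univ (PL m) := by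
  refine ⟨?_, ?_, ?_⟩
  · intro q _hq
    refine ⟨?_, Multiset.pairwise_sort _ _, ?_⟩
    · intro z hz
      exact q.parts_pos (by rwa [← Multiset.mem_sort (r := (· ≤ ·))])
    · show (q.parts.sort (· ≤ ·)).sum = m
      rw [← Multiset.sum_coe, Multiset.sort_eq, q.parts_sum]
  · intro q1 _h1 q2 _h2 h
    have h1 : (q1.parts : Multiset ℕ) = q2.parts := by
      simp only [pmap] at h
      rw [← Multiset.sort_eq q1.parts (· ≤ ·), ← Multiset.sort_eq q2.parts (· ≤ ·), h]
    exact Nat.Partition.ext h1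
  · intro b hb
    obtain ⟨hpos, hsort, hsum⟩ := hb
    refine ⟨⟨(b : Multiset ℕ), ?_, by simpa using hsum⟩, Set.mem_univ _, ?_⟩
    · intro i hi; exact hpos i (by simpa using hi)
    · apply List.Perm.eq_of_pairwise' (Multiset.pairwise_sort _ _) hsort
      rw [← Multiset.coe_eq_coe, Multiset.sort_eq]

lemma PL_finite (m : ℕ) : (PL m).Finite := by
  rw [← (bijOn_p m).image_eq]
  exact Set.Finite.image _ (Set.finite_univ)

lemma PL_ncard (m : ℕ) : (PL m).ncard = Fintype.card (Nat.Partition m) := by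
  rw [← (bijOn_p m).image_eq, Set.ncard_image_of_injOn (bijOn_p m).injOn,
    Set.ncard_univ, Nat.card_eq_fintype_card]

lemma N_finite (m : ℕ) : (NSet (m + 2)).Finite := by
  rw [← (bijOn_g m).image_eq]
  exact Set.Finite.image _ (PL_finite m)

lemma N_ncard (m : ℕ) : (NSet (m + 2)).ncard = Fintype.card (Nat.Partition m) := by
  rw [← (bijOn_g m).image_eq, Set.ncard_image_of_injOn (bijOn_g m).injOn, PL_ncard]

lemma A_eq_PL (n : ℕ) (hn : 1 ≤ n) : {a : List ℕ | IsAscComp n a} = PL n := by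
  ext a
  simp only [Set.mem_setOf_eq, IsAscComp, PL]
  constructor
  · rintro ⟨-, h2, h3, h4⟩; exact ⟨h2, h3, h4⟩
  · rintro ⟨h2, h3, h4⟩
    refine ⟨?_, h2, h3, h4⟩
    rintro rfl
    simp at h4; omega

lemma T_eq (n : ℕ) :
    {a : List ℕ | IsAscComp n a ∧ 1 ≤ a.head! ∧ IsTerminal a} =
      {a : List ℕ | IsAscComp n a} \ NSet n := by
  ext a
  simp only [Set.mem_setOf_eq, Set.mem_diff, NSet]
  constructor
  · rintro ⟨h1, -, h3⟩
    exact ⟨h1, fun h => h.2 h3⟩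
  · rintro ⟨h1, h2⟩
    refine ⟨h1, ?_, not_not.mp (fun hnt => h2 ⟨h1, hnt⟩)⟩
    obtain ⟨hne, hpos, -, -⟩ := h1
    rcases a with _ | ⟨u, t⟩
    · simp at hne
    · have := hpos u (by simp); simp; omega

lemma pZ_nat (k : ℕ) : pZ (k : ℤ) = Fintype.card (Nat.Partition k) := by
  simp [pZ]

/-- For every positive integer `n`, `ntac(n, 1) = p(n) - p(n - 2)`. -/
theorem stmt_13 (n : ℕ) (hn : 1 ≤ n) :
    (ntac n 1 : ℤ) = (pZ n : ℤ) - (pZ ((n : ℤ) - 2) : ℤ) := by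
  unfold ntac
  rw [T_eq, A_eq_PL n hn]
  rcases Nat.lt_or_ge n 2 with h2 | h2
  · have hne : n = 1 := by omega
    subst hne
    have hN : NSet 1 = ∅ := by
      ext a
      rw [mem_N_iff]
      simp only [Set.mem_empty_iff_false, iff_false]
      rintro ⟨d, x, y, rfl, -, -, -, hx, hxy, -, hsum⟩
      omega
    rw [hN, Set.diff_empty, PL_ncard, pZ_nat]
    norm_num [pZ]
  · obtain ⟨m, rfl⟩ : ∃ m, n = m + 2 := ⟨n - 2, by omega⟩
    have hsub : NSet (m + 2) ⊆ PL (m + 2) := by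
      rw [← A_eq_PL _ hn]
      intro a ha
      exact ha.1
    rw [Set.ncard_diff hsub (N_finite m), PL_ncard, N_ncard]
    have hle : Fintype.card (Nat.Partition m) ≤ Fintype.card (Nat.Partition (m + 2)) := by
      rw [← N_ncard, ← PL_ncard]
      exact Set.ncard_le_ncard hsub (PL_finite _)
    have e1 : (((m + 2 : ℕ) : ℤ)) - 2 = ((m : ℕ) : ℤ) := by push_cast; ring
    rw [e1, pZ_nat, pZ_nat]
    omega
end

section
/- For every positive integer n, the number of nonterminal ascending compositions of n equals p(n−2). Equivalently, the number of partitions of n in which the largest part y and the second largest part x satisfy 2x > y equals the number of partitions of n−2. -/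
/-! ### Auxiliary development -/

instance : DecidablePred IsTerminal := fun l => by unfold IsTerminal; infer_instance

/-- Nonterminal, nonempty. -/
def NTpred (l : List ℕ) : Prop := l ≠ [] ∧ ¬ IsTerminal l

instance : DecidablePred NTpred := fun l => by unfold NTpred; infer_instance

/-- The specification: a (possibly empty) ascending composition of `n` with parts `≥ m`. -/
def Spec (n m : ℕ) (l : List ℕ) : Prop :=
  l.Pairwise (· ≤ ·) ∧ (∀ x ∈ l, m ≤ x) ∧ l.sum = n

lemma spec_zero {m : ℕ} {l : List ℕ} (hm : 1 ≤ m) (h : Spec 0 m l) : l = [] := by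
  cases l with
  | nil => rfl
  | cons x t =>
    exfalso
    have hx := h.2.1 x (by simp)
    have hs := h.2.2
    simp [List.sum_cons] at hs
    omega

lemma spec_nil {n m : ℕ} : Spec n m [] ↔ n = 0 := by
  constructor
  · intro h; exact h.2.2.symm
  · rintro rfl; exact ⟨List.Pairwise.nil, by simp, rfl⟩

lemma spec_cons_iff {n m : ℕ} {l : List ℕ} (hn : n ≠ 0) (hm : 1 ≤ m) :
    Spec n m l ↔ ∃ a r, (m ≤ a ∧ a ≤ n) ∧ Spec (n - a) a r ∧ l = a :: r := by
  constructor
  · rintro ⟨hsort, hpos, hsum⟩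
    cases l with
    | nil => exact absurd hsum.symm (by simpa using hn)
    | cons a r =>
      rw [List.pairwise_cons] at hsort
      have hsum' : a + r.sum = n := by simpa [List.sum_cons] using hsum
      refine ⟨a, r, ⟨hpos a (by simp), by omega⟩,
        ⟨hsort.2, fun x hx => hsort.1 x hx, by omega⟩, rfl⟩
  · rintro ⟨a, r, ⟨hma, han⟩, ⟨hsort, hpos, hsum⟩, rfl⟩
    refine ⟨List.pairwise_cons.mpr ⟨fun b hb => hpos b hb, hsort⟩, ?_, ?_⟩
    · intro x hx
      rcases List.mem_cons.mp hx with rfl | hx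
      · exact hma
      · exact le_trans hma (hpos x hx)
    · simp only [List.sum_cons, hsum]; omega

/-- Fuel-based enumeration of ascending compositions of `n` with parts `≥ m`. -/
def CfinAux : ℕ → ℕ → ℕ → Finset (List ℕ)
  | 0, n, _ => if n = 0 then {[]} else ∅
  | fuel + 1, n, m =>
    if n = 0 then {[]}
    else (Finset.Icc m n).biUnion fun a => (CfinAux fuel (n - a) a).image (a :: ·)

def Cfin (n m : ℕ) : Finset (List ℕ) := CfinAux n n m

lemma mem_CfinAux : ∀ fuel n m (l : List ℕ), 1 ≤ m → n ≤ fuel →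
    (l ∈ CfinAux fuel n m ↔ Spec n m l)
  | 0, n, m, l, hm, hn => by
    have : n = 0 := by omega
    subst this
    simp only [CfinAux, if_pos rfl, if_true, eq_self_iff_true, Finset.mem_singleton]
    constructor
    · rintro rfl; exact spec_nil.mpr rfl
    · exact spec_zero hm
  | fuel + 1, n, m, l, hm, hn => by
    by_cases h0 : n = 0
    · subst h0
      simp only [CfinAux, if_pos rfl, if_true, eq_self_iff_true, Finset.mem_singleton]
      constructor
      · rintro rfl; exact spec_nil.mpr rfl
      · exact spec_zero hm
    · rw [CfinAux, if_neg h0, spec_cons_iff h0 hm]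
      simp only [Finset.mem_biUnion, Finset.mem_image, Finset.mem_Icc]
      constructor
      · rintro ⟨a, ⟨hma, han⟩, r, hr, rfl⟩
        exact ⟨a, r, ⟨hma, han⟩,
          (mem_CfinAux fuel (n - a) a r (le_trans hm hma) (by omega)).mp hr, rfl⟩
      · rintro ⟨a, r, ⟨hma, han⟩, hr, rfl⟩
        exact ⟨a, ⟨hma, han⟩, r,
          (mem_CfinAux fuel (n - a) a r (le_trans hm hma) (by omega)).mpr hr, rfl⟩

lemma mem_Cfin {n m : ℕ} {l : List ℕ} (hm : 1 ≤ m) : l ∈ Cfin n m ↔ Spec n m l :=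
  mem_CfinAux n n m l hm le_rfl

lemma Cfin_eq {n m : ℕ} (hn : n ≠ 0) (hm : 1 ≤ m) :
    Cfin n m = (Finset.Icc m n).biUnion fun a => (Cfin (n - a) a).image (a :: ·) := by
  ext l
  rw [mem_Cfin hm, spec_cons_iff hn hm]
  simp only [Finset.mem_biUnion, Finset.mem_image, Finset.mem_Icc]
  constructor
  · rintro ⟨a, r, ⟨hma, han⟩, hr, rfl⟩
    exact ⟨a, ⟨hma, han⟩, r, (mem_Cfin (le_trans hm hma)).mpr hr, rfl⟩
  · rintro ⟨a, ⟨hma, han⟩, r, hr, rfl⟩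
    exact ⟨a, r, ⟨hma, han⟩, (mem_Cfin (le_trans hm hma)).mp hr, rfl⟩

lemma cons_head_inj (a : ℕ) : Function.Injective (fun r : List ℕ => a :: r) := by
  intro x y h
  simpa using h

lemma card_Cfin_rec {n m : ℕ} (hn : n ≠ 0) (hm : 1 ≤ m) :
    (Cfin n m).card = ∑ a ∈ Finset.Icc m n, (Cfin (n - a) a).card := by
  rw [Cfin_eq hn hm, Finset.card_biUnion]
  · exact Finset.sum_congr rfl fun a _ =>
      Finset.card_image_of_injective _ (cons_head_inj a)
  · intro a _ b _ hab
    rw [Function.onFun_apply, Finset.disjoint_left]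
    rintro l hl hl'
    simp only [Finset.mem_image] at hl hl'
    obtain ⟨r, _, rfl⟩ := hl
    obtain ⟨r', _, h⟩ := hl'
    injection h with h1 _
    exact hab h1.symm

/-- the nonterminal ascending compositions of `n` with parts `≥ m`. -/
def NTfin (n m : ℕ) : Finset (List ℕ) := (Cfin n m).filter NTpred

lemma not_NTpred_singleton (c : ℕ) : ¬ NTpred [c] := fun h => h.2 (Or.inl rfl)

lemma NTpred_cons (a : ℕ) (r : List ℕ) :
    NTpred (a :: r) ↔ (NTpred r ∨ ∃ c, r = [c] ∧ 2 * a > c) := by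
  match r with
  | [] =>
    constructor
    · rintro ⟨-, h⟩
      exact absurd (Or.inl rfl) h
    · rintro (⟨h, -⟩ | ⟨c, hc, -⟩)
      · exact absurd rfl h
      · exact absurd hc (by simp)
  | [c] =>
    simp only [NTpred, IsTerminal]
    constructor
    · rintro ⟨-, h⟩
      right
      refine ⟨c, rfl, ?_⟩
      simp only [List.length_cons, List.length_nil] at h
      push_neg at h
      have := h.2 (by norm_num)
      simpa using this
    · rintro (⟨-, h⟩ | ⟨c', hc, h⟩)
      · exact absurd (Or.inl rfl) h
      · obtain rfl : c' = c := by simpa using hc.symm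
        refine ⟨by simp, ?_⟩
        rintro (h1 | ⟨-, h2⟩)
        · simp at h1
        · simp only [List.length_cons, List.length_nil] at h2
          norm_num at h2
          omega
  | c :: d :: t =>
    have key : IsTerminal (a :: c :: d :: t) ↔ IsTerminal (c :: d :: t) := by
      unfold IsTerminal
      have h1 : (a :: c :: d :: t).length = t.length + 3 := by simp
      have h2 : (c :: d :: t).length = t.length + 2 := by simp
      rw [h1, h2]
      have e1 : t.length + 3 - 2 = t.length + 1 := by omega
      have e2 : t.length + 3 - 1 = t.length + 2 := by omega
      have e3 : t.length + 2 - 2 = t.length := by omega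
      have e4 : t.length + 2 - 1 = t.length + 1 := by omega
      rw [e1, e2, e3, e4]
      simp only [List.getElem!_cons_succ]
      constructor
      · rintro (h | ⟨-, h⟩)
        · omega
        · exact Or.inr ⟨by omega, h⟩
      · rintro (h | ⟨-, h⟩)
        · omega
        · exact Or.inr ⟨by omega, h⟩
    constructor
    · rintro ⟨-, h⟩
      exact Or.inl ⟨by simp, fun ht => h (key.mpr ht)⟩
    · rintro (⟨-, h⟩ | ⟨c', hc, -⟩)
      · exact ⟨by simp, fun ht => h (key.mp ht)⟩
      · simp at hc

lemma card_NTfin_rec {n m : ℕ} (hn : n ≠ 0) (hm : 1 ≤ m) :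
    (NTfin n m).card = ∑ a ∈ Finset.Icc m n,
      ((NTfin (n - a) a).card + if a ≤ n - a ∧ n - a < 2 * a then 1 else 0) := by
  unfold NTfin
  rw [Cfin_eq hn hm, Finset.filter_biUnion, Finset.card_biUnion]
  swap
  · intro a _ b _ hab
    rw [Function.onFun_apply, Finset.disjoint_left]
    rintro l hl hl'
    simp only [Finset.mem_filter, Finset.mem_image] at hl hl'
    obtain ⟨⟨r, _, rfl⟩, -⟩ := hl
    obtain ⟨⟨r', _, h⟩, -⟩ := hl'
    injection h with h1 _
    exact hab h1.symm
  refine Finset.sum_congr rfl fun a ha => ?_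
  rw [Finset.mem_Icc] at ha
  have ha1 : 1 ≤ a := le_trans hm ha.1
  rw [Finset.filter_image, Finset.card_image_of_injective _ (cons_head_inj a)]
  have hsplit : (Cfin (n - a) a).filter (fun r => NTpred (a :: r)) =
      ((Cfin (n - a) a).filter NTpred) ∪
        ((Cfin (n - a) a).filter (fun r => r = [n - a] ∧ n - a < 2 * a)) := by
    rw [← Finset.filter_or]
    apply Finset.filter_congr
    intro r hr
    rw [mem_Cfin ha1] at hr
    rw [NTpred_cons]
    constructor
    · rintro (h | ⟨c, rfl, hc⟩)
      · exact Or.inl h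
      · have : c = n - a := by simpa using hr.2.2
        subst this
        exact Or.inr ⟨rfl, by omega⟩
    · rintro (h | ⟨rfl, h2⟩)
      · exact Or.inl h
      · exact Or.inr ⟨n - a, rfl, by omega⟩
  rw [hsplit, Finset.card_union_of_disjoint]
  swap
  · rw [Finset.disjoint_left]
    rintro l hl hl'
    simp only [Finset.mem_filter] at hl hl'
    obtain ⟨-, rfl, -⟩ := hl'
    exact not_NTpred_singleton _ hl.2
  congr 1
  by_cases hc2 : n - a < 2 * a
  · by_cases hc1 : a ≤ n - a
    · rw [if_pos ⟨hc1, hc2⟩]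
      have : (Cfin (n - a) a).filter (fun r => r = [n - a] ∧ n - a < 2 * a)
          = {[n - a]} := by
        ext r
        simp only [Finset.mem_filter, Finset.mem_singleton]
        constructor
        · rintro ⟨-, rfl, -⟩; rfl
        · rintro rfl
          refine ⟨(mem_Cfin ha1).mpr ⟨List.pairwise_singleton _ _, ?_, by simp⟩, rfl, hc2⟩
          intro x hx
          simp only [List.mem_singleton] at hx
          omega
      rw [this]; rfl
    · rw [if_neg (by tauto)]
      rw [Finset.card_eq_zero, Finset.filter_eq_empty_iff]
      rintro r hr ⟨rfl, -⟩
      rw [mem_Cfin ha1] at hr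
      have := hr.2.1 (n - a) (by simp)
      omega
  · rw [if_neg (by tauto)]
    rw [Finset.card_eq_zero, Finset.filter_eq_empty_iff]
    rintro r hr ⟨rfl, h⟩
    omega

lemma NTfin_empty {n m : ℕ} (hm : 1 ≤ m) (h : n < 2 * m) : NTfin n m = ∅ := by
  rw [Finset.eq_empty_iff_forall_notMem]
  intro l hl
  rw [NTfin, Finset.mem_filter, mem_Cfin hm] at hl
  obtain ⟨⟨hsort, hpos, hsum⟩, hne, hnt⟩ := hl
  match l with
  | [] => exact hne rfl
  | [x] => exact hnt (Or.inl rfl)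
  | x :: y :: t =>
    have hx := hpos x (by simp)
    have hy := hpos y (by simp)
    have : x + (y + t.sum) = n := by simpa [List.sum_cons] using hsum
    omega

lemma card_Cfin_small {k b : ℕ} (hb : 1 ≤ b) (hk : k < 2 * b) :
    (Cfin k b).card = if k = 0 ∨ b ≤ k then 1 else 0 := by
  by_cases h0 : k = 0
  · subst h0
    rw [if_pos (Or.inl rfl)]
    have : Cfin 0 b = {[]} := by
      ext l
      rw [mem_Cfin hb, Finset.mem_singleton]
      constructor
      · exact spec_zero hb
      · rintro rfl; exact spec_nil.mpr rfl
    rw [this]; rfl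
  · by_cases hbk : b ≤ k
    · rw [if_pos (Or.inr hbk)]
      have : Cfin k b = {[k]} := by
        ext l
        rw [mem_Cfin hb, Finset.mem_singleton]
        constructor
        · rintro ⟨hsort, hpos, hsum⟩
          match l with
          | [] => exact absurd hsum.symm (by simpa using h0)
          | [x] => simp only [List.sum_cons, List.sum_nil, add_zero] at hsum; rw [hsum]
          | x :: y :: t =>
            have hx := hpos x (by simp)
            have hy := hpos y (by simp)
            have : x + (y + t.sum) = k := by simpa [List.sum_cons] using hsum
            omega
        · rintro rfl
          refine ⟨List.pairwise_singleton _ _, ?_, by simp⟩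
          intro x hx
          simp only [List.mem_singleton] at hx
          omega
      rw [this]; rfl
    · rw [if_neg (by tauto)]
      rw [Finset.card_eq_zero, Finset.eq_empty_iff_forall_notMem]
      intro l hl
      rw [mem_Cfin hb] at hl
      obtain ⟨hsort, hpos, hsum⟩ := hl
      match l with
      | [] => exact h0 hsum.symm
      | x :: t =>
        have hx := hpos x (by simp)
        have : x + t.sum = k := by simpa [List.sum_cons] using hsum
        omega

/-- Main lemma: for `2m ≤ n`, `1 ≤ m`, the number of nonterminal ascending
compositions of `n` with parts `≥ m` equals the number of ascending compositions
of `n - 2` with parts `≥ m`. -/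
lemma card_NTfin_eq : ∀ n m : ℕ, 1 ≤ m → 2 * m ≤ n →
    (NTfin n m).card = (Cfin (n - 2) m).card := by
  intro n
  induction n using Nat.strong_induction_on with
  | _ n IH =>
    intro m hm h2m
    have hn0 : n ≠ 0 := by omega
    rw [card_NTfin_rec hn0 hm]
    by_cases hn2 : n = 2
    · subst hn2
      have hm1 : m = 1 := by omega
      subst hm1
      have hIcc : Finset.Icc 1 2 = {1, 2} := rfl
      rw [hIcc]
      rw [Finset.sum_insert (by decide), Finset.sum_singleton]
      rw [NTfin_empty le_rfl (by omega), NTfin_empty (by omega) (by omega)]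
      have h01 : (Cfin 0 1).card = 1 := by
        have := card_Cfin_small (b := 1) (k := 0) le_rfl (by omega)
        simpa using this
      simp only [Finset.card_empty]
      rw [show (2 : ℕ) - 2 = 0 from rfl, h01]
      norm_num
    · have hn3 : 3 ≤ n := by omega
      have hL : ∀ a ∈ Finset.Icc m n,
          (NTfin (n - a) a).card + (if a ≤ n - a ∧ n - a < 2 * a then 1 else 0)
          = (if 3 * a ≤ n then (Cfin (n - 2 - a) a).card else 0)
            + (if a ≤ n - a ∧ n - a < 2 * a then 1 else 0) := by
        intro a ha
        rw [Finset.mem_Icc] at ha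
        congr 1
        by_cases h3 : 3 * a ≤ n
        · rw [if_pos h3, IH (n - a) (by omega) a (by omega) (by omega),
            show n - a - 2 = n - 2 - a by omega]
        · rw [if_neg h3, NTfin_empty (by omega) (by omega), Finset.card_empty]
      rw [Finset.sum_congr rfl hL, Finset.sum_add_distrib]
      rw [card_Cfin_rec (show n - 2 ≠ 0 by omega) hm]
      have hR : ∀ b ∈ Finset.Icc m (n - 2), (Cfin (n - 2 - b) b).card
          = (if 3 * b ≤ n then (Cfin (n - 2 - b) b).card else 0)
            + (if ¬ 3 * b ≤ n ∧ (n - 2 - b = 0 ∨ b ≤ n - 2 - b) then 1 else 0) := by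
        intro b hb
        rw [Finset.mem_Icc] at hb
        by_cases h3 : 3 * b ≤ n
        · rw [if_pos h3, if_neg (by tauto), add_zero]
        · rw [if_neg h3, card_Cfin_small (le_trans hm hb.1) (by omega), zero_add]
          by_cases hcond : n - 2 - b = 0 ∨ b ≤ n - 2 - b
          · rw [if_pos hcond, if_pos ⟨h3, hcond⟩]
          · rw [if_neg hcond, if_neg (by tauto)]
      rw [Finset.sum_congr rfl hR, Finset.sum_add_distrib]
      congr 1
      · -- the main sums agree
        rw [← Finset.sum_subset (Finset.Icc_subset_Icc_right (show n - 2 ≤ n by omega))]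
        intro a ha hna
        rw [Finset.mem_Icc] at ha
        simp only [Finset.mem_Icc, not_and, not_le] at hna
        rw [if_neg (by omega)]
      · -- the counting sums agree
        rw [← Finset.card_filter, ← Finset.card_filter]
        by_cases hn4 : n = 3
        · subst hn4
          rw [Finset.filter_eq_empty_iff.mpr, Finset.filter_eq_empty_iff.mpr]
          · intro b hb
            rw [Finset.mem_Icc] at hb
            omega
          · intro a ha
            rw [Finset.mem_Icc] at ha
            omega
        · have hn4' : 4 ≤ n := by omega
          have e1 : (Finset.Icc m n).filter (fun a => a ≤ n - a ∧ n - a < 2 * a)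
              = Finset.Icc (max m (n / 3 + 1)) (n / 2) := by
            ext a
            simp only [Finset.mem_filter, Finset.mem_Icc]
            omega
          have e2 : (Finset.Icc m (n - 2)).filter
                (fun b => ¬ 3 * b ≤ n ∧ (n - 2 - b = 0 ∨ b ≤ n - 2 - b))
              = insert (n - 2) (Finset.Icc (max m (n / 3 + 1)) ((n - 2) / 2)) := by
            ext b
            simp only [Finset.mem_filter, Finset.mem_Icc, Finset.mem_insert]
            omega
          rw [e1, e2, Finset.card_insert_of_notMem (by
            simp only [Finset.mem_Icc]
            omega)]
          rw [Nat.card_Icc, Nat.card_Icc]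
          omega

lemma card_Cfin_partition (k : ℕ) : (Cfin k 1).card = Fintype.card (Nat.Partition k) := by
  rw [← Finset.card_univ]
  refine Finset.card_bij
    (fun l hl => ⟨(l : Multiset ℕ),
      fun {i} hi => ((mem_Cfin le_rfl).mp hl).2.1 i (Multiset.mem_coe.mp hi),
      by rw [Multiset.sum_coe]; exact ((mem_Cfin le_rfl).mp hl).2.2⟩)
    (fun _ _ => Finset.mem_univ _) ?_ ?_
  · intro l1 h1 l2 h2 heq
    have hparts : (l1 : Multiset ℕ) = (l2 : Multiset ℕ) :=
      congrArg Nat.Partition.parts heq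
    exact List.Perm.eq_of_pairwise' ((mem_Cfin le_rfl).mp h1).1
      ((mem_Cfin le_rfl).mp h2).1 (Multiset.coe_eq_coe.mp hparts)
  · intro p _
    refine ⟨p.parts.sort (· ≤ ·), (mem_Cfin le_rfl).mpr
      ⟨Multiset.pairwise_sort _ _, ?_, ?_⟩, ?_⟩
    · intro x hx
      exact p.parts_pos ((Multiset.mem_sort _).mp hx)
    · rw [← Multiset.sum_coe, Multiset.sort_eq]
      exact p.parts_sum
    · apply Nat.Partition.ext
      exact Multiset.sort_eq _ _

/-- For every positive integer `n`, the number of nonterminal ascending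
compositions of `n` equals `p(n - 2)`. -/
theorem stmt_14 (n : ℕ) (hn : 1 ≤ n) :
    Set.ncard {a : List ℕ | IsAscComp n a ∧ ¬ IsTerminal a} = pZ ((n : ℤ) - 2) := by
  have hset : {a : List ℕ | IsAscComp n a ∧ ¬ IsTerminal a} = ↑(NTfin n 1) := by
    ext l
    simp only [Set.mem_setOf_eq, Finset.coe_filter, NTfin, Finset.mem_coe,
      Finset.mem_filter, mem_Cfin le_rfl]
    constructor
    · rintro ⟨⟨hne, hpos, hsort, hsum⟩, hnt⟩
      exact ⟨⟨hsort, fun x hx => hpos x hx, hsum⟩, hne, hnt⟩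
    · rintro ⟨⟨hsort, hpos, hsum⟩, hne, hnt⟩
      exact ⟨⟨hne, fun x hx => hpos x hx, hsort, hsum⟩, hnt⟩
  rw [hset, Set.ncard_coe_finset]
  rcases eq_or_lt_of_le hn with h1 | h2
  · -- n = 1
    have : n = 1 := h1.symm
    subst this
    rw [NTfin_empty le_rfl (by omega), Finset.card_empty]
    rw [pZ, if_neg (by norm_num)]
  · -- n ≥ 2
    have hn2 : 2 ≤ n := h2
    rw [card_NTfin_eq n 1 le_rfl (by omega), card_Cfin_partition]
    rw [pZ, if_pos (by omega : (0:ℤ) ≤ (n : ℤ) - 2)]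
    have : ((n : ℤ) - 2).toNat = n - 2 := by omega
    rw [this]
end

section
/- For every positive integer n, p(n) = (1/2)·(1 + n + S), where S is the sum of ⌊(a_{k−1} + a_k)/(a_{k−1} + 1)⌋ taken over all ascending compositions ⟨a_1,…,a_k⟩ of n with k ≥ 2 (i.e. over all ascending compositions of n other than the singleton ⟨n⟩). -/
open Finset

def C : ℕ → ℕ → Finset (List ℕ)
  | 0, _ => {[]}
  | (n+1), m =>
    (Finset.Icc (max m 1) (n+1)).attach.biUnion fun j =>
      (C (n + 1 - j.1) j.1).image (j.1 :: ·)
termination_by n m => n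
decreasing_by
  · have := j.2; simp only [Finset.mem_Icc] at this
    have h1 : 1 ≤ j.1 := le_trans (le_max_right _ _) this.1
    omega

lemma mem_C : ∀ (n : ℕ) {m : ℕ}, 1 ≤ m → ∀ {a : List ℕ},
    (a ∈ C n m ↔ a.sum = n ∧ (m :: a).Pairwise (· ≤ ·)) := by
  intro n
  induction n using Nat.strong_induction_on with
  | _ n IH =>
    intro m hm a
    match n with
    | 0 =>
      rw [C.eq_1, Finset.mem_singleton]
      constructor
      · rintro rfl; simp
      · rintro ⟨hs, hsort⟩
        rw [List.pairwise_cons] at hsort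
        cases a with
        | nil => rfl
        | cons x t =>
          have : m ≤ x := hsort.1 x (by simp)
          have : x ≤ x + t.sum := Nat.le_add_right _ _
          simp [List.sum_cons] at hs
          omega
    | n + 1 =>
      rw [C.eq_2]
      simp only [Finset.mem_biUnion, Finset.mem_attach, true_and, Finset.mem_image,
        Subtype.exists, Finset.mem_Icc]
      have hmax : m ⊔ 1 = m := by omega
      rw [hmax]
      constructor
      · rintro ⟨j, ⟨hmj, hjn⟩, rest, hrest, rfl⟩
        have hj1 : 1 ≤ j := le_trans hm hmj
        have hrec := (IH (n + 1 - j) (by omega) hj1 (a := rest)).mp hrest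
        obtain ⟨hsum, hsort⟩ := hrec
        rw [List.pairwise_cons] at hsort ⊢
        refine ⟨by simp [hsum]; omega, fun b hb => ?_, ?_⟩
        · rcases List.mem_cons.mp hb with rfl | hb
          · exact hmj
          · exact le_trans hmj (hsort.1 b hb)
        · rw [List.pairwise_cons]; exact hsort
      · rintro ⟨hs, hsort⟩
        rw [List.pairwise_cons] at hsort
        cases a with
        | nil => simp at hs
        | cons j rest =>
          have hmj : m ≤ j := hsort.1 j (by simp)
          have hj1 : 1 ≤ j := le_trans hm hmj
          simp only [List.sum_cons] at hs
          have hjn : j ≤ n + 1 := by omega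
          refine ⟨j, ⟨hmj, hjn⟩, rest, ?_, rfl⟩
          rw [IH (n + 1 - j) (by omega) hj1]
          exact ⟨by omega, hsort.2⟩

lemma sum_C (n m : ℕ) (hm : 1 ≤ m) (hn : 1 ≤ n) (f : List ℕ → ℕ) :
    ∑ a ∈ C n m, f a = ∑ j ∈ Finset.Icc m n, ∑ rest ∈ C (n - j) j, f (j :: rest) := by
  match n, hn with
  | n+1, _ =>
    rw [C.eq_2]
    have hmax : m ⊔ 1 = m := by omega
    rw [hmax]
    rw [Finset.sum_biUnion ?disj]
    · rw [← Finset.sum_attach (Finset.Icc m (n+1))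
        (fun j => ∑ rest ∈ C (n + 1 - j) j, f (j :: rest))]
      apply Finset.sum_congr rfl
      intro j _
      rw [Finset.sum_image]
      intro x _ y _ h
      simpa using h
    case disj =>
      intro x _ y _ hxy
      apply Finset.disjoint_left.mpr
      rintro a hax hay
      obtain ⟨rx, _, rfl⟩ := Finset.mem_image.mp hax
      obtain ⟨ry, _, he⟩ := Finset.mem_image.mp hay
      simp only [List.cons.injEq] at he
      exact hxy (Subtype.ext he.1.symm)

def P (n m : ℕ) : ℕ := (C n m).card
def t (a : List ℕ) : ℕ := (a[a.length - 2]! + a[a.length - 1]!) / (a[a.length - 2]! + 1)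
def gt' (a : List ℕ) : ℕ := if 2 ≤ a.length then t a else 0
def T (n m : ℕ) : ℕ := ∑ a ∈ C n m, gt' a

lemma P_zero (m : ℕ) : P 0 m = 1 := by simp [P, C.eq_1]
lemma T_zero (m : ℕ) : T 0 m = 0 := by simp [T, C.eq_1, gt']

lemma C_empty {n m : ℕ} (h : 1 ≤ n) (h2 : n < m) : C n m = ∅ := by
  rw [Finset.eq_empty_iff_forall_notMem]
  intro a ha
  rw [mem_C n (by omega)] at ha
  obtain ⟨hs, hsort⟩ := ha
  rw [List.pairwise_cons] at hsort
  cases a with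
  | nil => simp at hs; omega
  | cons x tl =>
    have : m ≤ x := hsort.1 x (by simp)
    have : x ≤ x + tl.sum := Nat.le_add_right _ _
    simp [List.sum_cons] at hs
    omega

lemma P_rec {n m : ℕ} (hm : 1 ≤ m) (hn : 1 ≤ n) :
    P n m = ∑ j ∈ Finset.Icc m n, P (n - j) j := by
  rw [P, Finset.card_eq_sum_ones, sum_C n m hm hn]
  exact Finset.sum_congr rfl fun j _ => (Finset.card_eq_sum_ones _).symm

lemma t_cons {j : ℕ} {a : List ℕ} (h : 2 ≤ a.length) : t (j :: a) = t a := by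
  obtain ⟨k, hk⟩ : ∃ k, a.length = k + 2 := ⟨a.length - 2, by omega⟩
  simp [t, hk]

lemma t_pair (x y : ℕ) : t [x, y] = (x + y) / (x + 1) := by simp [t]

lemma filter_len1 (k j : ℕ) (hj : 1 ≤ j) :
    (C k j).filter (fun a => a.length = 1) =
      if 1 ≤ k ∧ j ≤ k then {[k]} else ∅ := by
  ext a
  rw [Finset.mem_filter, mem_C k hj]
  constructor
  · rintro ⟨⟨hs, hsort⟩, hlen⟩
    match a, hlen with
    | [y], _ =>
      simp only [List.sum_cons, List.sum_nil, add_zero] at hs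
      rw [List.pairwise_cons] at hsort
      have hjy : j ≤ y := hsort.1 y (by simp)
      rw [if_pos ⟨by omega, by omega⟩]
      simp [hs]
  · intro ha
    split at ha
    · next hc =>
      simp only [Finset.mem_singleton] at ha
      subst ha
      refine ⟨⟨by simp, ?_⟩, by simp⟩
      rw [List.pairwise_cons]
      exact ⟨fun b hb => by simp at hb; omega, by simp⟩
    · simp at ha

lemma innerC (k j : ℕ) (hj : 1 ≤ j) :
    ∑ rest ∈ C k j, gt' (j :: rest) =
      T k j + (if 1 ≤ k ∧ j ≤ k then (j + k) / (j + 1) else 0) := by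
  have step : ∀ rest ∈ C k j,
      gt' (j :: rest) = gt' rest + (if rest.length = 1 then (j + k) / (j + 1) else 0) := by
    intro rest hrest
    have hm := (mem_C k hj).mp hrest
    match rest with
    | [] => simp [gt']
    | [y] =>
      have hy : y = k := by simpa using hm.1
      subst hy
      simp [gt', t_pair]
    | x :: y :: r =>
      have h2 : 2 ≤ (x :: y :: r).length := by simp
      rw [gt', gt', if_pos (by simp), if_pos h2, t_cons h2]
      simp
  rw [Finset.sum_congr rfl step, Finset.sum_add_distrib]
  congr 1
  rw [← Finset.sum_filter, filter_len1 k j hj]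
  split <;> simp

lemma tele (g : ℕ → ℕ) (m : ℕ) : ∀ k, m ≤ k →
    ∑ j ∈ Finset.Ico m k, g j + g k = ∑ j ∈ Finset.Ico m k, g (j + 1) + g m := by
  intro k hk
  induction k, hk using Nat.le_induction with
  | base => simp
  | succ k hk IH =>
    rw [Finset.sum_Ico_succ_top hk, Finset.sum_Ico_succ_top hk]
    omega

theorem key : ∀ n m : ℕ, 1 ≤ m → m ≤ n → T n m + 1 + n / m = 2 * P n m := by
  intro n
  induction n using Nat.strong_induction_on with
  | _ n IH =>
    intro m hm hmn
    have hn : 1 ≤ n := le_trans hm hmn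
    have hT : T n m = ∑ j ∈ Finset.Icc m n,
        (T (n - j) j + (if 1 ≤ n - j ∧ j ≤ n - j then n / (j + 1) else 0)) := by
      rw [T, sum_C n m hm hn]
      apply Finset.sum_congr rfl
      intro j hj
      simp only [Finset.mem_Icc] at hj
      rw [innerC (n - j) j (le_trans hm hj.1)]
      congr 1
      rcases Nat.lt_or_ge (n - j) 1 with h | h
      · rw [if_neg (by omega), if_neg (by omega)]
      · by_cases hc : j ≤ n - j
        · rw [if_pos ⟨h, hc⟩, if_pos ⟨h, hc⟩]
          congr 1
          omega
        · rw [if_neg (by omega), if_neg (by omega)]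
    -- per-j identity
    have perj : ∀ j ∈ Finset.Icc m n,
        (T (n - j) j + (if 1 ≤ n - j ∧ j ≤ n - j then n / (j + 1) else 0))
          + n / j + (if j = n then 1 else 0)
        = 2 * P (n - j) j + n / (j + 1) := by
      intro j hj
      simp only [Finset.mem_Icc] at hj
      obtain ⟨hmj, hjn⟩ := hj
      have hj1 : 1 ≤ j := le_trans hm hmj
      rcases eq_or_lt_of_le hjn with rfl | hjlt
      · -- j = n
        rw [Nat.sub_self, T_zero, P_zero, if_neg (by omega), if_pos rfl,
          Nat.div_self (by omega), Nat.div_eq_of_lt (by omega)]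
      · by_cases hc : j ≤ n - j
        · -- 2j ≤ n
          have hrec := IH (n - j) (by omega) j hj1 hc
          have hd : n / j = (n - j) / j + 1 := by
            conv_lhs => rw [show n = (n - j) + j by omega]
            rw [Nat.add_div_right _ hj1]
          rw [if_pos ⟨by omega, hc⟩, if_neg (by omega), hd]
          omega
        · -- n/2 < j < n
          have h1 : 1 ≤ n - j := by omega
          have hCe : C (n - j) j = ∅ := C_empty h1 (by omega)
          have hT0 : T (n - j) j = 0 := by rw [T, hCe]; simp
          have hP0 : P (n - j) j = 0 := by rw [P, hCe]; simp
          have hd1 : n / j = 1 :=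
            Nat.div_eq_of_lt_le (by omega : 1 * j ≤ n) (by omega : n < (1 + 1) * j)
          have hd2 : n / (j + 1) = 1 :=
            Nat.div_eq_of_lt_le (by omega : 1 * (j + 1) ≤ n) (by omega : n < (1 + 1) * (j + 1))
          rw [hT0, hP0, if_neg (by omega), if_neg (by omega), hd1, hd2]
    -- sum the per-j identity
    have hsum := Finset.sum_congr rfl perj
    rw [Finset.sum_add_distrib, Finset.sum_add_distrib, Finset.sum_add_distrib,
      Finset.sum_add_distrib, ← Finset.mul_sum,
      Finset.sum_ite_eq' (Finset.Icc m n) n (fun _ => 1),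
      if_pos (Finset.mem_Icc.mpr ⟨hmn, le_refl n⟩)] at hsum
    rw [Finset.sum_add_distrib] at hT
    -- telescoping
    have htel := tele (fun j => n / j) m (n + 1) (by omega)
    rw [show Finset.Ico m (n + 1) = Finset.Icc m n from Finset.Ico_add_one_right_eq_Icc m n] at htel
    have hz : n / (n + 1) = 0 := Nat.div_eq_of_lt (by omega)
    rw [hz] at htel
    rw [P_rec hm hn]
    omega

lemma isAscComp_iff {n : ℕ} (hn : 1 ≤ n) {a : List ℕ} : IsAscComp n a ↔ a ∈ C n 1 := by
  rw [mem_C n le_rfl, List.pairwise_cons, IsAscComp]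
  constructor
  · rintro ⟨hne, hpos, hsort, hsum⟩
    exact ⟨hsum, fun b hb => hpos b hb, hsort⟩
  · rintro ⟨hsum, hb, hsort⟩
    refine ⟨?_, fun x hx => hb x hx, hsort, hsum⟩
    rintro rfl
    simp at hsum
    omega

def partEquiv (n : ℕ) : Nat.Partition n ≃ {a // a ∈ C n 1} where
  toFun p := ⟨Multiset.sort p.parts (· ≤ ·), by
    rw [mem_C n le_rfl, List.pairwise_cons]
    refine ⟨?_, fun b hb => p.parts_pos (Multiset.mem_sort _ |>.mp hb), Multiset.pairwise_sort _ _⟩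
    rw [← Multiset.sum_coe, Multiset.sort_eq, p.parts_sum]⟩
  invFun a := ⟨(↑a.1 : Multiset ℕ), by
      intro i hi
      have := (mem_C n le_rfl).mp a.2
      rw [List.pairwise_cons] at this
      exact this.2.1 i (by simpa using hi), by
      rw [Multiset.sum_coe]
      exact ((mem_C n le_rfl).mp a.2).1⟩
  left_inv p := Nat.Partition.ext (Multiset.sort_eq _ _)
  right_inv a := Subtype.ext <| by
    show Multiset.sort (↑a.1 : Multiset ℕ) (· ≤ ·) = a.1
    have hs := ((mem_C n le_rfl).mp a.2).2
    rw [List.pairwise_cons] at hs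
    exact List.Perm.eq_of_pairwise' (Multiset.pairwise_sort _ _) hs.2
      (Multiset.coe_eq_coe.mp (Multiset.sort_eq _ _))

lemma card_part (n : ℕ) : Fintype.card (Nat.Partition n) = P n 1 := by
  rw [P, ← Fintype.card_coe]
  exact Fintype.card_congr (partEquiv n)

/-- For every positive integer `n`,
`p(n) = (1/2)·(1 + n + ∑ ⌊(a_{k-1} + a_k)/(a_{k-1} + 1)⌋)`, the sum ranging over
all ascending compositions `⟨a_1, …, a_k⟩` of `n` with `k ≥ 2` (equivalently, stated
with both sides multiplied by `2`; the division inside the sum is the `ℕ` floor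
division). -/
theorem stmt_15 (n : ℕ) (hn : 1 ≤ n) :
    2 * Fintype.card (Nat.Partition n) =
      1 + n + ∑ᶠ a ∈ {a : List ℕ | IsAscComp n a ∧ 2 ≤ a.length},
        (a[a.length - 2]! + a[a.length - 1]!) / (a[a.length - 2]! + 1) := by
  have hset : {a : List ℕ | IsAscComp n a ∧ 2 ≤ a.length}
      = ↑((C n 1).filter fun a => 2 ≤ a.length) := by
    ext a
    simp only [Set.mem_setOf_eq, Finset.coe_filter, isAscComp_iff hn]
  rw [hset, finsum_mem_coe_finset]
  have hTs : ∑ a ∈ (C n 1).filter (fun a => 2 ≤ a.length),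
      (a[a.length - 2]! + a[a.length - 1]!) / (a[a.length - 2]! + 1) = T n 1 := by
    rw [T, Finset.sum_filter]
    exact Finset.sum_congr rfl fun a _ => rfl
  have hkey := key n 1 le_rfl hn
  rw [Nat.div_one] at hkey
  rw [card_part, hTs]
  omega
end

section
/- For every positive integer n, p(n) = (1/2)·(1 + S'), where S' is the sum of ⌊(b_{k−1} + b_k)/(b_{k−1} + 1)⌋ taken over all sequences ⟨b_0, b_1,…,b_k⟩ obtained from an ascending composition ⟨a_1,…,a_k⟩ of n by prefixing a part b_0 = 0 (so that for the singleton composition ⟨n⟩ the summand is ⌊(0+n)/(0+1)⌋ = n). -/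
namespace Stmt16Aux
def X (b : List ℕ) : ℕ := b.tail.headD 0
def Y (b : List ℕ) : ℕ := b.headD 0
def DC (n : ℕ) (b : List ℕ) : Prop :=
  b ≠ [] ∧ (∀ x ∈ b, 0 < x) ∧ b.Pairwise (· ≥ ·) ∧ b.sum = n
def fwd (r : List ℕ) (j : ℕ) : List ℕ :=
  (X r + Y r - j * (X r + 1)) :: (List.replicate j (X r + 1) ++ r.tail.tail)
@[simp] lemma X_cons_cons (y x : ℕ) (c : List ℕ) : X (y :: x :: c) = x := rfl
@[simp] lemma X_single (y : ℕ) : X [y] = 0 := rfl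
@[simp] lemma Y_cons (y : ℕ) (l : List ℕ) : Y (y :: l) = y := rfl

lemma sum_eq (r : List ℕ) (hr : r ≠ []) : r.sum = Y r + X r + r.tail.tail.sum := by
  match r with
  | [y] => simp [X, Y]
  | y :: x :: c => simp [X, Y]; ring

lemma tail_tail_le (r : List ℕ) (hs : r.Pairwise (· ≥ ·)) :
    ∀ t ∈ r.tail.tail, t ≤ X r := by
  match r with
  | [] => simp
  | [y] => simp
  | y :: x :: c =>
    intro t ht
    have := (List.pairwise_cons.1 (List.pairwise_cons.1 hs).2).1 t ht
    simpa using this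

lemma tail_tail_sorted (r : List ℕ) (hs : r.Pairwise (· ≥ ·)) :
    r.tail.tail.Pairwise (· ≥ ·) :=
  hs.sublist ((r.tail.tail_sublist).trans r.tail_sublist)

lemma tail_tail_mem (r : List ℕ) {t : ℕ} (ht : t ∈ r.tail.tail) : t ∈ r :=
  ((r.tail.tail_sublist).trans r.tail_sublist).mem ht

lemma fwd_mem (n : ℕ) (r : List ℕ) (j : ℕ) (hr : DC n r) (hj1 : 1 ≤ j)
    (hj2 : j * (X r + 1) + 1 ≤ Y r) :
    DC n (fwd r j) ∧ 2 ≤ (fwd r j).length := by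
  obtain ⟨hne, hpos, hsort, hsum⟩ := hr
  have hXY : X r + 1 ≤ X r + Y r - j * (X r + 1) := by omega
  refine ⟨⟨by simp [fwd], ?_, ?_, ?_⟩, ?_⟩
  · intro t ht
    simp only [fwd, List.mem_cons, List.mem_append, List.mem_replicate] at ht
    rcases ht with h | h | h
    · omega
    · omega
    · exact hpos t (tail_tail_mem r h)
  · rw [fwd, List.pairwise_cons]
    constructor
    · intro t ht
      simp only [List.mem_append, List.mem_replicate] at ht
      rcases ht with h | h
      · omega
      · have := tail_tail_le r hsort t h; omega
    · rw [List.pairwise_append]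
      refine ⟨List.pairwise_replicate.2 (by simp), tail_tail_sorted r hsort, ?_⟩
      intro a ha b hb
      have ha' := (List.mem_replicate.1 ha).2
      have := tail_tail_le r hsort b hb
      omega
  · have h1 : (fwd r j).sum = (X r + Y r - j * (X r + 1)) + (j * (X r + 1) + r.tail.tail.sum) := by
      simp [fwd, List.sum_replicate, smul_eq_mul]
    rw [sum_eq r hne] at hsum
    rw [h1]; omega
  · simp [fwd]; omega
end Stmt16Aux

namespace Stmt16Aux

def bwdJ (b : List ℕ) : ℕ := (b.tail.takeWhile (fun t => t = X b)).length
def bwdC (b : List ℕ) : List ℕ := b.tail.dropWhile (fun t => t = X b)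
def bwdY (b : List ℕ) : ℕ := Y b + 1 - X b + bwdJ b * X b
def bwdL (b : List ℕ) : List ℕ :=
  if X b = 1 then [bwdY b] else bwdY b :: (X b - 1) :: bwdC b

lemma bwd_spec (n : ℕ) (b : List ℕ) (hb : DC n b) (hlen : 2 ≤ b.length) :
    ∃ z v rest k c, b = z :: v :: rest ∧ rest = List.replicate k v ++ c ∧
      bwdJ b = k + 1 ∧ bwdC b = c ∧ 1 ≤ v ∧ v ≤ z ∧
      (∀ t ∈ c, 0 < t ∧ t ≤ v - 1) ∧ c.Pairwise (· ≥ ·) ∧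
      z + ((k + 1) * v + c.sum) = n := by
  obtain ⟨hne, hpos, hsort, hsum⟩ := hb
  match b, hlen with
  | z :: v :: rest, _ =>
    set p : ℕ → Bool := fun t => decide (t = v) with hp
    have hpv : p v = true := by simp [hp]
    have htw : ∀ t ∈ rest.takeWhile p, t = v := by
      intro t ht
      have := List.mem_takeWhile_imp ht
      simpa [hp] using this
    refine ⟨z, v, rest, (rest.takeWhile p).length, rest.dropWhile p, rfl, ?_, ?_, ?_, ?_, ?_, ?_, ?_, ?_⟩
    · conv_lhs => rw [← List.takeWhile_append_dropWhile (p := p) (l := rest)]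
      congr 1
      exact List.eq_replicate_of_mem htw
    · show ((v :: rest).takeWhile _).length = _
      rw [show (fun t => decide (t = X (z :: v :: rest))) = p from rfl,
        List.takeWhile_cons_of_pos hpv]
      simp
    · show ((v :: rest).dropWhile _) = _
      rw [show (fun t => decide (t = X (z :: v :: rest))) = p from rfl,
        List.dropWhile_cons_of_pos hpv]
    · exact hpos v (by simp)
    · exact (List.pairwise_cons.1 hsort).1 v (by simp)
    · have hcsub : (rest.dropWhile p).Sublist rest := List.dropWhile_sublist p
      have hrest_le : ∀ t ∈ rest, t ≤ v := by
        intro t ht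
        exact (List.pairwise_cons.1 (List.pairwise_cons.1 hsort).2).1 t ht
      have hcsort : (rest.dropWhile p).Pairwise (· ≥ ·) :=
        ((List.pairwise_cons.1 (List.pairwise_cons.1 hsort).2).2).sublist hcsub
      intro t ht
      refine ⟨hpos t (by simp [hcsub.mem ht]), ?_⟩
      match hc : rest.dropWhile p, ht with
      | h :: c', ht =>
        have hh : ¬ (h = v) := by
          have := List.head?_dropWhile_not p rest
          rw [hc] at this
          simpa [hp] using this
        have hhv : h ≤ v := hrest_le h (hcsub.mem (by rw [hc]; simp))
        rw [hc] at hcsort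
        rcases List.mem_cons.1 ht with rfl | ht'
        · omega
        · have := (List.pairwise_cons.1 hcsort).1 t ht'
          omega
    · exact ((List.pairwise_cons.1 (List.pairwise_cons.1 hsort).2).2).sublist
        (List.dropWhile_sublist p)
    · have hr : rest.sum = (rest.takeWhile p).length * v + (rest.dropWhile p).sum := by
        conv_lhs => rw [← List.takeWhile_append_dropWhile (p := p) (l := rest)]
        rw [List.sum_append, List.eq_replicate_of_mem htw]
        simp [List.sum_replicate, smul_eq_mul]
      rw [← hsum]
      rw [List.sum_cons, List.sum_cons, hr]
      ring

end Stmt16Aux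

namespace Stmt16Aux

lemma takeWhile_rep (j v : ℕ) (c : List ℕ) :
    ((List.replicate j v ++ c).takeWhile (fun t => t = v)) =
      List.replicate j v ++ c.takeWhile (fun t => t = v) := by
  induction j with
  | zero => simp
  | succ k ih => simp [List.replicate_succ, ih]

lemma dropWhile_rep (j v : ℕ) (c : List ℕ) :
    ((List.replicate j v ++ c).dropWhile (fun t => t = v)) =
      c.dropWhile (fun t => t = v) := by
  induction j with
  | zero => simp
  | succ k ih => simp [List.replicate_succ, ih]

lemma bwd_c_nil {v : ℕ} {c : List ℕ} (hv : v = 1)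
    (hc : ∀ t ∈ c, 0 < t ∧ t ≤ v - 1) : c = [] := by
  cases c with
  | nil => rfl
  | cons h t => have := hc h (by simp); omega

lemma bwd_mem (n : ℕ) (b : List ℕ) (hb : DC n b) (hlen : 2 ≤ b.length) :
    DC n (bwdL b) ∧ 1 ≤ bwdJ b ∧
      bwdJ b * (X (bwdL b) + 1) + 1 ≤ Y (bwdL b) := by
  obtain ⟨z, v, rest, k, c, hbeq, hrest, hJ, hC, hv1, hvz, hc, hcsort, hsum⟩ :=
    bwd_spec n b hb hlen
  have hXb : X b = v := by rw [hbeq]; rfl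
  have hYb : Y b = z := by rw [hbeq]; rfl
  have hy : bwdY b = z + 1 - v + (k + 1) * v := by
    rw [bwdY, hXb, hYb, hJ]
  by_cases hv : v = 1
  · have hcn : c = [] := bwd_c_nil hv hc
    have hbl : bwdL b = [bwdY b] := by rw [bwdL, hXb, if_pos hv]
    subst hv hcn
    simp only [List.sum_nil] at hsum
    have hy' : bwdY b = z + k + 1 := by omega
    refine ⟨⟨by simp [hbl], ?_, ?_, ?_⟩, by omega, ?_⟩
    · intro t ht; rw [hbl] at ht; simp at ht; omega
    · rw [hbl]; simp
    · rw [hbl]; simp [hy']; omega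
    · rw [hbl, hJ]; simp [hy']; omega
  · have hbl : bwdL b = bwdY b :: (v - 1) :: c := by rw [bwdL, hXb, if_neg hv, hC]
    have hXl : X (bwdL b) = v - 1 := by rw [hbl]; rfl
    have hYl : Y (bwdL b) = bwdY b := by rw [hbl]; rfl
    set M := (k + 1) * v with hM
    have hMv : v ≤ M := by
      calc v = 1 * v := by ring
      _ ≤ (k + 1) * v := by apply Nat.mul_le_mul_right; omega
    refine ⟨⟨by simp [hbl], ?_, ?_, ?_⟩, by omega, ?_⟩
    · intro t ht
      rw [hbl] at ht
      rcases List.mem_cons.1 ht with rfl | ht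
      · omega
      · rcases List.mem_cons.1 ht with rfl | ht
        · omega
        · exact (hc t ht).1
    · rw [hbl, List.pairwise_cons, List.pairwise_cons]
      refine ⟨?_, ?_, hcsort⟩
      · intro t ht
        rcases List.mem_cons.1 ht with rfl | ht
        · omega
        · have := (hc t ht).2; omega
      · intro t ht; exact (hc t ht).2
    · rw [hbl]; simp only [List.sum_cons]; omega
    · rw [hXl, hYl, hJ]
      have h1 : (k + 1) * (v - 1 + 1) = M := by rw [hM]; congr 1; omega
      rw [h1]
      omega

lemma left_inv (n : ℕ) (r : List ℕ) (j : ℕ) (hr : DC n r) (hj1 : 1 ≤ j)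
    (hj2 : j * (X r + 1) + 1 ≤ Y r) :
    bwdL (fwd r j) = r ∧ bwdJ (fwd r j) = j := by
  obtain ⟨hne, hpos, hsort, hsum⟩ := hr
  obtain ⟨k, rfl⟩ : ∃ k, j = k + 1 := ⟨j - 1, by omega⟩
  set v := X r + 1 with hv
  set z := X r + Y r - (k + 1) * (X r + 1) with hz
  have hfwd : fwd r (k + 1) = z :: v :: (List.replicate k v ++ r.tail.tail) := by
    rw [fwd, List.replicate_succ]; rfl
  have hXf : X (fwd r (k + 1)) = v := by rw [hfwd]; rfl
  set p : ℕ → Bool := fun t => decide (t = v) with hp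
  have htt : ∀ t ∈ r.tail.tail, t ≤ X r := tail_tail_le r hsort
  have htwt : r.tail.tail.takeWhile p = [] := by
    cases htt' : r.tail.tail with
    | nil => rfl
    | cons h t =>
      apply List.takeWhile_cons_of_neg
      have := htt h (by rw [htt']; simp)
      simp [hp]; omega
  have hdwt : r.tail.tail.dropWhile p = r.tail.tail := by
    cases htt' : r.tail.tail with
    | nil => rfl
    | cons h t =>
      apply List.dropWhile_cons_of_neg
      have := htt h (by rw [htt']; simp)
      simp [hp]; omega
  have htail : (fwd r (k + 1)).tail = List.replicate (k + 1) v ++ r.tail.tail := by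
    rw [hfwd, List.replicate_succ]; rfl
  have hpeq : (fun t => decide (t = X (fwd r (k + 1)))) = p := by
    rw [hXf]
  have hJ : bwdJ (fwd r (k + 1)) = k + 1 := by
    rw [bwdJ, htail, hpeq, takeWhile_rep, htwt]
    simp
  have hC : bwdC (fwd r (k + 1)) = r.tail.tail := by
    rw [bwdC, htail, hpeq, dropWhile_rep, hdwt]
  have hYf : Y (fwd r (k + 1)) = z := by rw [hfwd]; rfl
  have hyv : bwdY (fwd r (k + 1)) = Y r := by
    rw [bwdY, hJ, hXf, hYf, hz, hv]
    set M := (k + 1) * (X r + 1) with hM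
    have : X r + 1 ≤ M := by
      calc X r + 1 = 1 * (X r + 1) := by ring
      _ ≤ (k + 1) * (X r + 1) := by apply Nat.mul_le_mul_right; omega
    omega
  refine ⟨?_, hJ⟩
  by_cases hX0 : X r = 0
  · have hbl : bwdL (fwd r (k + 1)) = [Y r] := by
      rw [bwdL, hXf, if_pos (by omega : v = 1), hyv]
    rw [hbl]
    cases r with
    | nil => exact absurd rfl hne
    | cons y rest =>
      cases rest with
      | nil => rfl
      | cons x c =>
        exfalso
        have h1 : 0 < x := hpos x (by simp)
        have h2 : X (y :: x :: c) = x := rfl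
        omega
  · have hbl : bwdL (fwd r (k + 1)) =
        Y r :: (X r) :: r.tail.tail := by
      rw [bwdL, hXf, if_neg (by omega : ¬ v = 1), hyv, hC, hv]
      simp
    rw [hbl]
    cases r with
    | nil => exact absurd rfl hne
    | cons y rest =>
      cases rest with
      | nil => exact absurd rfl hX0
      | cons x c => rfl

end Stmt16Aux

namespace Stmt16Aux

lemma right_inv (n : ℕ) (b : List ℕ) (hb : DC n b) (hlen : 2 ≤ b.length) :
    fwd (bwdL b) (bwdJ b) = b := by
  obtain ⟨z, v, rest, k, c, hbeq, hrest, hJ, hC, hv1, hvz, hc, hcsort, hsum⟩ :=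
    bwd_spec n b hb hlen
  have hXb : X b = v := by rw [hbeq]; rfl
  have hYb : Y b = z := by rw [hbeq]; rfl
  have hy : bwdY b = z + 1 - v + (k + 1) * v := by
    rw [bwdY, hXb, hYb, hJ]
  have hMv : v ≤ (k + 1) * v := by
    calc v = 1 * v := by ring
    _ ≤ (k + 1) * v := by apply Nat.mul_le_mul_right; omega
  by_cases hv : v = 1
  · have hcn : c = [] := bwd_c_nil hv hc
    have hbl : bwdL b = [bwdY b] := by rw [bwdL, hXb, if_pos hv]
    rw [hbl, hJ, fwd]
    have h1 : X [bwdY b] = 0 := rfl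
    have h2 : Y [bwdY b] = bwdY b := rfl
    rw [h1, h2]
    have h3 : 0 + bwdY b - (k + 1) * (0 + 1) = z := by
      subst hv; simp at hy hMv ⊢; omega
    rw [h3, hbeq, hrest, hcn]
    simp [List.replicate_succ, hv]
  · have hbl : bwdL b = bwdY b :: (v - 1) :: c := by rw [bwdL, hXb, if_neg hv, hC]
    rw [hbl, hJ, fwd]
    have h1 : X (bwdY b :: (v - 1) :: c) = v - 1 := rfl
    have h2 : Y (bwdY b :: (v - 1) :: c) = bwdY b := rfl
    rw [h1, h2]
    have h4 : v - 1 + 1 = v := by omega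
    rw [h4]
    have h3 : v - 1 + bwdY b - (k + 1) * v = z := by omega
    rw [h3, hbeq, hrest]
    simp [List.replicate_succ]

end Stmt16Aux

namespace Stmt16Aux

lemma Y_pos (n : ℕ) (b : List ℕ) (hb : DC n b) : 1 ≤ Y b := by
  obtain ⟨hne, hpos, -, -⟩ := hb
  cases b with
  | nil => exact absurd rfl hne
  | cons h t => exact hpos h (by simp)

lemma key (n : ℕ) (hn : 1 ≤ n) (D : Finset (List ℕ)) (hD : ∀ b, b ∈ D ↔ DC n b) :
    2 * D.card = 1 + ∑ b ∈ D, (X b + Y b) / (X b + 1) := by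
  classical
  have hsummand : ∀ b ∈ D, (X b + Y b) / (X b + 1) = (Y b - 1) / (X b + 1) + 1 := by
    intro b hb
    have hY := Y_pos n b ((hD b).1 hb)
    have : X b + Y b = (Y b - 1) + (X b + 1) := by omega
    rw [this, Nat.add_div_right _ (Nat.succ_pos _)]
  rw [Finset.sum_congr rfl hsummand, Finset.sum_add_distrib, Finset.sum_const, smul_eq_mul,
    mul_one]
  have hIcc : ∀ (r : List ℕ) (j : ℕ), j ∈ Finset.Icc 1 ((Y r - 1) / (X r + 1)) ↔
      1 ≤ j ∧ j * (X r + 1) + 1 ≤ Y r := by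
    intro r j
    rw [Finset.mem_Icc, Nat.le_div_iff_mul_le (show 0 < X r + 1 by omega)]
    constructor
    · rintro ⟨h1, h2⟩
      refine ⟨h1, ?_⟩
      have : 1 ≤ j * (X r + 1) := by
        calc 1 = 1 * 1 := rfl
        _ ≤ j * (X r + 1) := Nat.mul_le_mul h1 (by omega)
      omega
    · rintro ⟨h1, h2⟩
      exact ⟨h1, by omega⟩
  have hbij : (D.sigma fun r => Finset.Icc 1 ((Y r - 1) / (X r + 1))).card =
      (D.filter fun b => 2 ≤ b.length).card := by
    refine Finset.card_bij' (fun rj _ => fwd rj.1 rj.2)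
      (fun b _ => ⟨bwdL b, bwdJ b⟩) ?_ ?_ ?_ ?_
    · rintro ⟨r, j⟩ h
      rw [Finset.mem_sigma] at h
      obtain ⟨hr, hj⟩ := h
      rw [hIcc] at hj
      obtain ⟨hmem, hlen⟩ := fwd_mem n r j ((hD r).1 hr) hj.1 hj.2
      rw [Finset.mem_filter]
      exact ⟨(hD _).2 hmem, hlen⟩
    · intro b hb
      rw [Finset.mem_filter] at hb
      obtain ⟨hmem, hlen, hj1, hj2⟩ :=
        And.intro ((hD b).1 hb.1) (And.intro hb.2 (bwd_mem n b ((hD b).1 hb.1) hb.2).2)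
      obtain ⟨hdc, -, -⟩ := bwd_mem n b hmem hlen
      rw [Finset.mem_sigma]
      exact ⟨(hD _).2 hdc, (hIcc _ _).2 ⟨hj1, hj2⟩⟩
    · rintro ⟨r, j⟩ h
      rw [Finset.mem_sigma] at h
      obtain ⟨hr, hj⟩ := h
      rw [hIcc] at hj
      obtain ⟨h1, h2⟩ := left_inv n r j ((hD r).1 hr) hj.1 hj.2
      simp [h1, h2]
    · intro b hb
      rw [Finset.mem_filter] at hb
      exact right_inv n b ((hD b).1 hb.1) hb.2
  rw [Finset.card_sigma] at hbij
  have hIccCard : ∀ r : List ℕ, (Finset.Icc 1 ((Y r - 1) / (X r + 1))).card =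
      (Y r - 1) / (X r + 1) := by
    intro r; rw [Nat.card_Icc, Nat.add_sub_cancel]
  rw [Finset.sum_congr rfl fun r _ => hIccCard r] at hbij
  have hfilter : D.filter (fun b => ¬ 2 ≤ b.length) = {[n]} := by
    ext b
    rw [Finset.mem_filter, Finset.mem_singleton, hD]
    constructor
    · rintro ⟨⟨hne, hpos, hsort, hsum⟩, hlen⟩
      match b, hne, hlen with
      | [t], _, _ => simp at hsum; rw [hsum]
      | t1 :: t2 :: ts, _, hlen => exact absurd (by simp) hlen
    · rintro rfl
      exact ⟨⟨by simp, by simp; omega, by simp, by simp⟩, by simp⟩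
  have hsplit := Finset.card_filter_add_card_filter_not
    (s := D) (p := fun b => 2 ≤ b.length)
  rw [hfilter, Finset.card_singleton] at hsplit
  rw [hbij]
  omega

end Stmt16Aux

namespace Stmt16Aux

lemma gl1 (l : List ℕ) (y : ℕ) : (l ++ [y])[l.length]! = y := by
  induction l with
  | nil => simp
  | cons a t ih => simpa using ih

lemma gl2 (l : List ℕ) (x y : ℕ) : (l ++ [x, y])[l.length]! = x := by
  induction l with
  | nil => simp
  | cons a t ih => simpa using ih

lemma idx_last (a : List ℕ) (ha : a ≠ []) :
    (0 :: a)[(0 :: a).length - 1]! = Y a.reverse := by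
  rcases List.eq_nil_or_concat a with rfl | ⟨c, y, rfl⟩
  · exact absurd rfl ha
  · rw [List.concat_eq_append]
    have h1 : (0 :: (c ++ [y])) = (0 :: c) ++ [y] := by simp
    conv_lhs => rw [h1]
    have h2 : ((0 :: c) ++ [y]).length - 1 = (0 :: c).length := by simp
    rw [h2, gl1]
    simp [Y]

lemma idx_pen (a : List ℕ) (ha : a ≠ []) :
    (0 :: a)[(0 :: a).length - 2]! = X a.reverse := by
  rcases List.eq_nil_or_concat a with rfl | ⟨c, y, rfl⟩
  · exact absurd rfl ha
  · rw [List.concat_eq_append]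
    rcases List.eq_nil_or_concat c with rfl | ⟨d, x, rfl⟩
    · simp [X]
    · rw [List.concat_eq_append]
      have h1 : (0 :: ((d ++ [x]) ++ [y])) = (0 :: d) ++ [x, y] := by simp
      conv_lhs => rw [h1]
      have h2 : ((0 :: d) ++ [x, y]).length - 2 = (0 :: d).length := by simp
      rw [h2, gl2]
      simp [X]

lemma asc_iff_dc_reverse (n : ℕ) (a : List ℕ) : IsAscComp n a ↔ DC n a.reverse := by
  constructor
  · rintro ⟨hne, hpos, hsort, hsum⟩
    refine ⟨by simpa using hne, fun x hx => hpos x (by simpa using hx), ?_,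
      by rw [List.sum_reverse]; exact hsum⟩
    rw [List.pairwise_reverse]
    exact hsort
  · rintro ⟨hne, hpos, hsort, hsum⟩
    refine ⟨by simpa using hne, fun x hx => hpos x (by simp [hx]), ?_,
      by rw [← List.sum_reverse]; exact hsum⟩
    rw [List.pairwise_reverse] at hsort
    exact hsort

end Stmt16Aux

open Stmt16Aux in
/-- For every positive integer `n`, `p(n) = (1/2)·(1 + S')`, where `S'` sums
`⌊(b_{k-1} + b_k)/(b_{k-1} + 1)⌋` over all sequences `b = 0 :: a` obtained by
prefixing a part `0` to an ascending composition `a` of `n` (stated with both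
sides multiplied by `2`; the division inside the sum is the `ℕ` floor division). -/
theorem stmt_16 (n : ℕ) (hn : 1 ≤ n) :
    2 * Fintype.card (Nat.Partition n) =
      1 + ∑ᶠ a ∈ {a : List ℕ | IsAscComp n a},
        ((0 :: a)[(0 :: a).length - 2]! + (0 :: a)[(0 :: a).length - 1]!) /
          ((0 :: a)[(0 :: a).length - 2]! + 1) := by
  classical
  set T : Finset (List ℕ) :=
    Finset.image (fun p : Nat.Partition n => p.parts.sort (· ≤ ·)) Finset.univ with hT
  have mem_T : ∀ a, a ∈ T ↔ IsAscComp n a := by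
    intro a
    rw [hT, Finset.mem_image]
    constructor
    · rintro ⟨p, -, rfl⟩
      refine ⟨?_, ?_, Multiset.pairwise_sort _ _, ?_⟩
      · intro h
        have h0 : p.parts = 0 := by
          have := Multiset.sort_eq p.parts (· ≤ ·)
          rw [h] at this
          simpa using this.symm
        have := p.parts_sum
        rw [h0] at this
        simp at this
        omega
      · intro x hx
        exact p.parts_pos (by rwa [← Multiset.mem_sort (r := (· ≤ ·))])
      · rw [← Multiset.sum_coe, Multiset.sort_eq]
        exact p.parts_sum
    · rintro ⟨hne, hpos, hsort, hsum⟩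
      refine ⟨⟨(a : Multiset ℕ), fun {i} hi => hpos i (by simpa using hi), by simpa using hsum⟩,
        Finset.mem_univ _, ?_⟩
      refine List.Perm.eq_of_pairwise' (Multiset.pairwise_sort _ _) hsort ?_
      rw [← Multiset.coe_eq_coe, Multiset.sort_eq]
  have hTcard : T.card = Fintype.card (Nat.Partition n) := by
    rw [hT, Finset.card_image_of_injOn, Finset.card_univ]
    intro p _ q _ h
    apply Nat.Partition.ext
    have h2 := congrArg (fun l : List ℕ => (l : Multiset ℕ)) h
    simpa [Multiset.sort_eq] using h2
  set D : Finset (List ℕ) := T.image List.reverse with hD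
  have mem_D : ∀ b, b ∈ D ↔ DC n b := by
    intro b
    rw [hD, Finset.mem_image]
    constructor
    · rintro ⟨a, ha, rfl⟩
      exact (asc_iff_dc_reverse n a).1 ((mem_T a).1 ha)
    · intro hb
      exact ⟨b.reverse, (mem_T _).2 ((asc_iff_dc_reverse n _).2 (by simpa using hb)), by simp⟩
  have hDcard : D.card = T.card :=
    Finset.card_image_of_injective _ List.reverse_injective
  have hkey := key n hn D mem_D
  have hset : {a : List ℕ | IsAscComp n a} = (T : Set (List ℕ)) := by
    ext a
    simp [mem_T a]
  rw [hset, finsum_mem_coe_finset]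
  have hsum2 : ∑ b ∈ D, (X b + Y b) / (X b + 1) =
      ∑ a ∈ T, (X a.reverse + Y a.reverse) / (X a.reverse + 1) := by
    rw [hD, Finset.sum_image (fun x _ y _ h => List.reverse_injective h)]
  have hsum3 : ∑ a ∈ T,
      ((0 :: a)[(0 :: a).length - 2]! + (0 :: a)[(0 :: a).length - 1]!) /
        ((0 :: a)[(0 :: a).length - 2]! + 1) =
      ∑ a ∈ T, (X a.reverse + Y a.reverse) / (X a.reverse + 1) := by
    refine Finset.sum_congr rfl fun a ha => ?_
    have hne : a ≠ [] := ((mem_T a).1 ha).1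
    rw [idx_last a hne, idx_pen a hne]
  rw [hsum3, ← hsum2, ← hkey, hDcard, hTcard]
end
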